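/- arXiv:2201.04062 — 4 statements merged into one kernel-verified Lean document; each statement's English description precedes it below -/
import Mathlib

section
/- For every integer β≥2, if a graph H is weakly β-buildable, then H is an induced subgraph of some β-buildable graph. -/
noncomputable section

namespace PurePairs

open SimpleGraph

variable {V W : Type*}

/-- A pure pair in `G`: a pair of disjoint vertex sets that are complete
or anticomplete to each other. -/
def PurePair (G : SimpleGraph V) (A B : Set V) : Prop :=
  Disjoint A B ∧
    ((∀ a ∈ A, ∀ b ∈ B, G.Adj a b) ∨ (∀ a ∈ A, ∀ b ∈ B, ¬ G.Adj a b))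

/-- `G` contains `H`: some induced subgraph of `G` is isomorphic to `H`. -/
def Contains (G : SimpleGraph V) (H : SimpleGraph W) : Prop :=
  Nonempty (H ↪g G)

/-- The congestion of a graph `H`: the maximum (here: supremum, together with `0`)
of `1 - (|J|-1)/|E(J)|` over all subgraphs `J` of `H` with at least one edge.
If `H` has no edges this is `0`. -/
def congestion (H : SimpleGraph V) : ℝ :=
  sSup ({0} ∪ {x : ℝ | ∃ J : H.Subgraph, J.edgeSet.Nonempty ∧
    x = 1 - ((J.verts.ncard : ℝ) - 1) / (J.edgeSet.ncard : ℝ)})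

/-- `A` is anticomplete to `B`: no edges between them. -/
def Anticomplete (G : SimpleGraph V) (A B : Set V) : Prop :=
  ∀ a ∈ A, ∀ b ∈ B, ¬ G.Adj a b

/-- `A` covers `B`: every vertex of `B` has a neighbour in `A`. -/
def Covers (G : SimpleGraph V) (A B : Set V) : Prop :=
  ∀ b ∈ B, ∃ a ∈ A, G.Adj a b

/-- `G` is `ε`-sparse: every vertex has degree less than `ε|G|`. -/
def EpsSparse (G : SimpleGraph V) [Fintype V] (ε : ℝ) : Prop :=
  ∀ v : V, ((G.neighborSet v).ncard : ℝ) < ε * (Fintype.card V : ℝ)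

/-- `G` is `(γ,δ)`-coherent: there is no pair of disjoint anticomplete sets `A`, `B`
with `|A| ≥ γ` and `|B| ≥ δ`. -/
def Coherent (G : SimpleGraph V) (γ δ : ℝ) : Prop :=
  ¬ ∃ A B : Set V, Disjoint A B ∧ Anticomplete G A B ∧
      γ ≤ (A.ncard : ℝ) ∧ δ ≤ (B.ncard : ℝ)

/-- `N(X)`: the set of vertices with a neighbour in `X`. -/
def nbhd (G : SimpleGraph V) (X : Set V) : Set V :=
  {v | ∃ x ∈ X, G.Adj x v}

/-- A blockade: a family of nonempty pairwise disjoint vertex sets indexed by a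
finite set of integers. -/
def IsBlockade (I : Finset ℤ) (A : ℤ → Set V) : Prop :=
  (∀ i ∈ I, (A i).Nonempty) ∧
    ∀ i ∈ I, ∀ j ∈ I, i ≠ j → Disjoint (A i) (A j)

/-- The blockade `(A i : i ∈ I)` is `(γ,δ)`-divergent. -/
def Divergent (G : SimpleGraph V) (I : Finset ℤ) (A : ℤ → Set V) (γ δ : ℝ) : Prop :=
  ∃ i ∈ I, ∃ j ∈ I, i ≠ j ∧ ∃ X ⊆ A i, ∃ Y ⊆ A j,
    γ * ((A i).ncard : ℝ) ≤ (X.ncard : ℝ) ∧ δ * ((A j).ncard : ℝ) ≤ (Y.ncard : ℝ) ∧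
    Anticomplete G X Y

/-- The blockade `(A i : i ∈ I)` is `τ`-expanding. -/
def Expanding (G : SimpleGraph V) (I : Finset ℤ) (A : ℤ → Set V) (τ : ℝ) : Prop :=
  ∀ i ∈ I, ∀ j ∈ I, i ≠ j → ∀ X ⊆ A i,
    min (τ * (X.ncard : ℝ) / ((A i).ncard : ℝ)) (1/4)
      ≤ (((nbhd G X) ∩ A j).ncard : ℝ) / ((A j).ncard : ℝ)

/-- The linkage of the blockade `(A i : i ∈ I)` is at most `lam`. -/
def LinkageLE (G : SimpleGraph V) (I : Finset ℤ) (A : ℤ → Set V) (lam : ℝ) : Prop :=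
  ∀ i ∈ I, ∀ j ∈ I, i ≠ j → ∀ v ∈ A i,
    ((G.neighborSet v ∩ A j).ncard : ℝ) ≤ lam * ((A j).ncard : ℝ)

/-- The shrinkage of the blockade `(A i : i ∈ I)` is at most `σ`, i.e. its width is at
least `|G|^{1-σ}`. -/
def ShrinkageLE [Fintype V] (I : Finset ℤ) (A : ℤ → Set V) (σ : ℝ) : Prop :=
  ∀ i ∈ I, (Fintype.card V : ℝ) ^ (1 - σ) ≤ ((A i).ncard : ℝ)

/-- `(L 0, …, L k)` is a levelling in `G`. -/
def IsLevelling (G : SimpleGraph V) (L : ℕ → Set V) (k : ℕ) : Prop :=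
  1 ≤ k ∧ (L 0).ncard = 1 ∧
  (∀ i ≤ k, ∀ j ≤ k, i ≠ j → Disjoint (L i) (L j)) ∧
  (∀ i, 1 ≤ i → i ≤ k → Covers G (L (i-1)) (L i)) ∧
  (∀ i, 2 ≤ i → i ≤ k → ∀ h, h + 2 ≤ i → Anticomplete G (L h) (L i))

/-- The levelling `(L 0, …, L k)` reaches `C`, i.e. `(L 0, …, L k, C)` is a levelling. -/
def Reaches (G : SimpleGraph V) (L : ℕ → Set V) (k : ℕ) (C : Set V) : Prop :=
  IsLevelling G (fun i => if i = k + 1 then C else L i) (k + 1)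

/-- The levelling `(L 0, …, L k)` is `(B i : i ∈ I)`-rainbow. -/
def RainbowLevelling (I : Finset ℤ) (B : ℤ → Set V) (L : ℕ → Set V) (k : ℕ) : Prop :=
  ∃ q : ℕ → ℤ, (∀ i ≤ k, q i ∈ I ∧ L i ⊆ B (q i)) ∧
    ∀ i ≤ k, ∀ j ≤ k, q i = q j → i = j

/-- The levelling `(L 0, …, L k)` grades the blockade `(C j : j ∈ J)` (in some order). -/
def Grades (G : SimpleGraph V) (L : ℕ → Set V) (k : ℕ) (J : Finset ℤ) (C : ℤ → Set V) :
    Prop :=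
  Reaches G L k (⋃ j ∈ J, C j) ∧
  ∃ e : ℕ → ℤ, (∀ g < J.card, e g ∈ J) ∧
    (∀ g < J.card, ∀ h < J.card, e g = e h → g = h) ∧
    ∀ g < J.card, ∃ Y ⊆ L k,
      (∀ h, g ≤ h → h < J.card → Covers G Y (C (e h))) ∧
      (∀ h, h < g → Anticomplete G Y (C (e h)))

/-- The levelling `(L 0, …, L k)` grades the blockade `(C j : j ∈ J)` forwards. -/
def GradesFwd (G : SimpleGraph V) (L : ℕ → Set V) (k : ℕ) (J : Finset ℤ) (C : ℤ → Set V) :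
    Prop :=
  Reaches G L k (⋃ j ∈ J, C j) ∧
  ∀ j ∈ J, ∃ Y ⊆ L k,
    (∀ i ∈ J, j ≤ i → Covers G Y (C i)) ∧
    (∀ i ∈ J, i < j → Anticomplete G Y (C i))

/-- The levelling `(L 0, …, L k)` grades the blockade `(C j : j ∈ J)` backwards. -/
def GradesBwd (G : SimpleGraph V) (L : ℕ → Set V) (k : ℕ) (J : Finset ℤ) (C : ℤ → Set V) :
    Prop :=
  Reaches G L k (⋃ j ∈ J, C j) ∧
  ∀ j ∈ J, ∃ Y ⊆ L k,
    (∀ i ∈ J, i ≤ j → Covers G Y (C i)) ∧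
    (∀ i ∈ J, j < i → Anticomplete G Y (C i))

/-- Two levellings are parallel. -/
def Parallel (G : SimpleGraph V) (L : ℕ → Set V) (k : ℕ) (M : ℕ → Set V) (m : ℕ) : Prop :=
  L 0 = M 0 ∧
  Disjoint (⋃ j ∈ Finset.Icc 1 m, M j) (⋃ i ∈ Finset.Icc 1 k, L i) ∧
  Anticomplete G (⋃ j ∈ Finset.Icc 1 m, M j) (⋃ i ∈ Finset.Icc 1 k, L i)

/-- `(L, M, C)` is a bi-levelling, where `L` has height `k` and `M` has height `m`:
`C` is a blockade, `L, M` are parallel levellings both reaching the union of the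
blocks of `C`, and `L` grades `C` forwards. Its height is `k + m` and its length is
the length of `C`. -/
def IsBiLevelling (G : SimpleGraph V) (L : ℕ → Set V) (k : ℕ) (M : ℕ → Set V) (m : ℕ)
    (J : Finset ℤ) (C : ℤ → Set V) : Prop :=
  IsBlockade J C ∧ IsLevelling G L k ∧ IsLevelling G M m ∧ Parallel G L k M m ∧
    Reaches G M m (⋃ j ∈ J, C j) ∧ GradesFwd G L k J C

/-- A bi-grading: a bi-levelling in which `M` also grades `C` backwards. -/
def IsBiGrading (G : SimpleGraph V) (L : ℕ → Set V) (k : ℕ) (M : ℕ → Set V) (m : ℕ)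
    (J : Finset ℤ) (C : ℤ → Set V) : Prop :=
  IsBiLevelling G L k M m J C ∧ GradesBwd G M m J C

/-- The bi-levelling `(L, M, C)` is `(A i : i ∈ I)`-rainbow: each block of `C`, each
level of `L`, and each level of `M` other than `M 0 = L 0` is included in a block of
`A`, and distinct such sets lie in distinct blocks. -/
def RainbowBiLevelling (I : Finset ℤ) (A : ℤ → Set V)
    (L : ℕ → Set V) (k : ℕ) (M : ℕ → Set V) (m : ℕ)
    (J : Finset ℤ) (C : ℤ → Set V) : Prop :=
  ∃ (qc : ℤ → ℤ) (ql qm : ℕ → ℤ),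
    (∀ j ∈ J, qc j ∈ I ∧ C j ⊆ A (qc j)) ∧
    (∀ i ≤ k, ql i ∈ I ∧ L i ⊆ A (ql i)) ∧
    (∀ i, 1 ≤ i → i ≤ m → qm i ∈ I ∧ M i ⊆ A (qm i)) ∧
    (∀ j ∈ J, ∀ j' ∈ J, qc j = qc j' → j = j') ∧
    (∀ i ≤ k, ∀ i' ≤ k, ql i = ql i' → i = i') ∧
    (∀ i, 1 ≤ i → i ≤ m → ∀ i', 1 ≤ i' → i' ≤ m → qm i = qm i' → i = i') ∧
    (∀ j ∈ J, ∀ i ≤ k, qc j ≠ ql i) ∧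
    (∀ j ∈ J, ∀ i, 1 ≤ i → i ≤ m → qc j ≠ qm i) ∧
    (∀ i ≤ k, ∀ i', 1 ≤ i' → i' ≤ m → ql i ≠ qm i')

/-- Each block of `(C j : j ∈ J)` lies in a block of `(A i : i ∈ I)`; the `A`-size of
`C` is at least `η` when every block of `C` has size at least `η` times the size of the
block of `A` containing it. -/
def SizeGE (I : Finset ℤ) (A : ℤ → Set V) (J : Finset ℤ) (C : ℤ → Set V) (η : ℝ) : Prop :=
  ∀ j ∈ J, ∀ i ∈ I, C j ⊆ A i → η * ((A i).ncard : ℝ) ≤ ((C j).ncard : ℝ)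

/-- A `(B i : i ∈ I)`-rainbow induced path `p 0 - p 1 - ⋯ - p n` in `G`. -/
def RainbowPath (G : SimpleGraph V) (I : Finset ℤ) (B : ℤ → Set V)
    (n : ℕ) (p : ℕ → V) : Prop :=
  (∀ i ≤ n, ∀ j ≤ n, p i = p j → i = j) ∧
  (∀ i < n, G.Adj (p i) (p (i+1))) ∧
  (∀ i j, i + 1 < j → j ≤ n → ¬ G.Adj (p i) (p j)) ∧
  ∃ q : ℕ → ℤ, (∀ i ≤ n, q i ∈ I ∧ p i ∈ B (q i)) ∧
    ∀ i ≤ n, ∀ j ≤ n, q i = q j → i = j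

/-- A `(B i : i ∈ I)`-rainbow copy of `H` in `G`: an induced copy of `H` with each
vertex in a different block. -/
def RainbowCopy (G : SimpleGraph V) (I : Finset ℤ) (B : ℤ → Set V)
    (H : SimpleGraph W) : Prop :=
  ∃ (f : H ↪g G) (q : W → ℤ), Function.Injective q ∧ ∀ w : W, q w ∈ I ∧ f w ∈ B (q w)

/-- `(N,K,σ,lam,c)` forces `H`. -/
def Forces (H : SimpleGraph W) (N K : ℕ) (σ lam c : ℝ) : Prop :=
  ∀ {V : Type} [Fintype V] (G : SimpleGraph V),
    Coherent G ((Fintype.card V : ℝ) ^ (1 - c)) ((Fintype.card V : ℝ) ^ (1 - c)) →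
    N ≤ Fintype.card V →
    ∀ (I : Finset ℤ) (A : ℤ → Set V), IsBlockade I A → I.card = K →
      ShrinkageLE I A σ → LinkageLE G I A lam →
      RainbowCopy G I A H

/-- `p 0 - ⋯ - p n` is a handle of length `n` that can be added to (the graph induced
on) `S` inside the ambient graph `H`: an induced path of `H[S ∪ p]` of length at least
two whose ends lie in `S`, whose internal vertices avoid `S` and have degree two in
`H[S ∪ p]`. -/
def IsHandle (H : SimpleGraph V) (S : Set V) (n : ℕ) (p : ℕ → V) : Prop :=
  2 ≤ n ∧
  (∀ i ≤ n, ∀ j ≤ n, p i = p j → i = j) ∧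
  p 0 ∈ S ∧ p n ∈ S ∧
  (∀ i, 0 < i → i < n → p i ∉ S) ∧
  (∀ i < n, H.Adj (p i) (p (i+1))) ∧
  (∀ i j, i + 1 < j → j ≤ n → ¬ H.Adj (p i) (p j)) ∧
  (∀ i, 0 < i → i < n → ∀ w, (w ∈ S ∨ ∃ j ≤ n, w = p j) → H.Adj (p i) w →
    w = p (i-1) ∨ w = p (i+1))

/-- The vertex sets `S` such that the induced subgraph `H[S]` can be built, starting
from the two-vertex graph with no edges, by repeatedly adding handles of length at
least `β`. -/
inductive BuildableOn (H : SimpleGraph V) (β : ℕ) : Set V → Prop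
  | base (u v : V) (huv : u ≠ v) (hadj : ¬ H.Adj u v) : BuildableOn H β {u, v}
  | handle (S : Set V) (n : ℕ) (p : ℕ → V) (hS : BuildableOn H β S)
      (hh : IsHandle H S n p) (hn : β ≤ n) :
      BuildableOn H β (S ∪ {w | ∃ j ≤ n, w = p j})

/-- `H` is `β`-buildable. -/
def Buildable [Fintype V] (H : SimpleGraph V) (β : ℕ) : Prop :=
  BuildableOn H β Set.univ

/-- The vertex sets `S` such that the induced subgraph `H[S]` can be built, starting
from the null graph, by repeatedly adding a subleaf or a handle of length at least
`β`. -/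
inductive WeaklyBuildableOn (H : SimpleGraph V) (β : ℕ) : Set V → Prop
  | empty : WeaklyBuildableOn H β ∅
  | subleaf (S : Set V) (v : V) (hv : v ∉ S) (hdeg : (S ∩ H.neighborSet v).ncard ≤ 1)
      (hS : WeaklyBuildableOn H β S) : WeaklyBuildableOn H β (insert v S)
  | handle (S : Set V) (n : ℕ) (p : ℕ → V) (hS : WeaklyBuildableOn H β S)
      (hh : IsHandle H S n p) (hn : β ≤ n) :
      WeaklyBuildableOn H β (S ∪ {w | ∃ j ≤ n, w = p j})

/-- `H` is weakly `β`-buildable. -/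
def WeaklyBuildable [Fintype V] (H : SimpleGraph V) (β : ℕ) : Prop :=
  WeaklyBuildableOn H β Set.univ

/-!
Replace every vertex `v` of `H` by `v` followed by a new path of `β` edges ending at a common
vertex `apex`, and add a vertex `foot` joined to the vertices that enter the construction of
`H` as isolated subleaves. Follow a construction sequence of `H`, starting from the
non-adjacent pair `{apex, foot}`: a subleaf `v` whose neighbour so far is `x` (its neighbour
in `H`, or `foot` if it has none) becomes the handle `x, v, chain of v, apex` of length
`β + 2`; a handle of `H` remains a handle, because the chains of its interior vertices are not
built yet; at the end the missing chains `v, chain of v, apex` are added as handles of length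
`β + 1`.
-/

section Handles

variable {X : Type*} {G : SimpleGraph X} {S : Set X} {n : ℕ} {p : ℕ → X}

theorem isHandle_of_adj_iff (hn : 2 ≤ n) (hinj : ∀ i ≤ n, ∀ j ≤ n, p i = p j → i = j)
    (hfirst : p 0 ∈ S) (hlast : p n ∈ S) (hint : ∀ i, 0 < i → i < n → p i ∉ S)
    (hends : ¬ G.Adj (p 0) (p n))
    (hadj : ∀ i, 0 < i → i < n → ∀ w, (w ∈ S ∨ ∃ j ≤ n, w = p j) →
      (G.Adj (p i) w ↔ w = p (i - 1) ∨ w = p (i + 1))) :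
    IsHandle G S n p := by
  have hpath : ∀ i, 0 < i → i < n → ∀ j ≤ n, G.Adj (p i) (p j) ↔ j + 1 = i ∨ j = i + 1 := by
    intro i hi0 hin j hj
    rw [hadj i hi0 hin _ (Or.inr ⟨j, hj, rfl⟩)]
    constructor
    · rintro (h | h)
      · exact Or.inl (by have := hinj j hj _ (by omega) h; omega)
      · exact Or.inr (hinj j hj _ (by omega) h)
    · rintro (h | rfl)
      · exact Or.inl (by rw [← h]; rfl)
      · exact Or.inr rfl
  refine ⟨hn, hinj, hfirst, hlast, hint, fun i hi => ?_, fun i j hij hj hadj' => ?_,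
    fun i hi0 hin w hw => (hadj i hi0 hin w hw).mp⟩
  · rcases Nat.eq_zero_or_pos i with rfl | hi0
    · exact ((hpath 1 one_pos (by omega) 0 (by omega)).mpr (Or.inl rfl)).symm
    · exact (hpath i hi0 (by omega) (i + 1) (by omega)).mpr (Or.inr rfl)
  · rcases Nat.lt_or_ge j n with hjn | hjn
    · have := (hpath j (by omega) hjn i (by omega)).mp hadj'.symm
      omega
    · rcases Nat.eq_zero_or_pos i with rfl | hi0
      · exact hends (by rwa [show j = n by omega] at hadj')
      · have := (hpath i hi0 (by omega) j hj).mp hadj'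
        omega

theorem IsHandle.notMem (hh : IsHandle G S n p) {i : ℕ} (hi0 : 0 < i) (hin : i < n) :
    p i ∉ S :=
  hh.2.2.2.2.1 i hi0 hin

theorem IsHandle.adj_iff (hh : IsHandle G S n p) {i : ℕ} (hi0 : 0 < i) (hin : i < n) {w : X}
    (hw : w ∈ S ∨ ∃ j ≤ n, w = p j) :
    G.Adj (p i) w ↔ w = p (i - 1) ∨ w = p (i + 1) := by
  refine ⟨hh.2.2.2.2.2.2.2 i hi0 hin w hw, ?_⟩
  rintro (rfl | rfl)
  · have := hh.2.2.2.2.2.1 (i - 1) (by omega)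
    rw [Nat.sub_add_cancel hi0] at this
    exact this.symm
  · exact hh.2.2.2.2.2.1 i hin

theorem IsHandle.adj_first_iff (hh : IsHandle G S n p) {j : ℕ} (hj : j ≤ n) :
    G.Adj (p 0) (p j) ↔ j = 1 := by
  refine ⟨fun h => ?_, fun h => h ▸ hh.2.2.2.2.2.1 0 (by have := hh.1; omega)⟩
  by_contra hj1
  rcases Nat.eq_zero_or_pos j with rfl | hj0
  · exact G.irrefl h
  · exact hh.2.2.2.2.2.2.1 0 j (by omega) hj h

def consPath (x : X) (p : ℕ → X) : ℕ → X
  | 0 => x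
  | j + 1 => p j

@[simp] theorem consPath_zero (x : X) (p : ℕ → X) : consPath x p 0 = x := rfl

@[simp] theorem consPath_succ (x : X) (p : ℕ → X) (j : ℕ) : consPath x p (j + 1) = p j := rfl

theorem setOf_consPath (x : X) (p : ℕ → X) (n : ℕ) :
    {w | ∃ j ≤ n + 1, w = consPath x p j} = insert x {w | ∃ j ≤ n, w = p j} := by
  ext w
  simp only [Set.mem_ofPred_eq, Set.mem_insert_iff]
  constructor
  · rintro ⟨_ | j, hj, rfl⟩
    · exact Or.inl rfl
    · exact Or.inr ⟨j, by omega, rfl⟩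
  · rintro (rfl | ⟨j, hj, rfl⟩)
    · exact ⟨0, by omega, rfl⟩
    · exact ⟨j + 1, by omega, rfl⟩

theorem IsHandle.consPath {x : X} (hh : IsHandle G (insert (p 0) S) n p) (hx : x ∈ S)
    (hp0 : p 0 ∉ S) (hnbr : ∀ w ∈ S, G.Adj (p 0) w ↔ w = x) (hxn : ¬ G.Adj x (p n)) :
    IsHandle G S (n + 1) (consPath x p) := by
  obtain ⟨hn, hinj, -, hlast, hint, -, -, -⟩ := id hh
  have hp_notMem : ∀ j, j < n → p j ∉ S := fun j hj hS => by
    rcases Nat.eq_zero_or_pos j with rfl | hj0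
    · exact hp0 hS
    · exact hint j hj0 hj (Set.mem_insert_of_mem _ hS)
  have hxp : ∀ j ≤ n, x ≠ p j := by
    rintro j hj rfl
    rcases Nat.lt_or_ge j n with hjn | hjn
    · exact hp_notMem j hjn hx
    · obtain rfl : j = n := by omega
      exact (hh.adj_first_iff le_rfl).not.mpr (by omega) ((hnbr _ hx).mpr rfl)
  refine isHandle_of_adj_iff (by omega) ?_ hx ?_ ?_ hxn ?_
  · rintro (_ | i) hi (_ | j) hj hij
    · rfl
    · exact absurd hij (hxp j (by omega))
    · exact absurd hij.symm (hxp i (by omega))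
    · exact congrArg (· + 1) (hinj i (by omega) j (by omega) hij)
  · exact (Set.mem_insert_iff.mp hlast).resolve_left fun h => by
      have := hinj n le_rfl 0 (Nat.zero_le _) h; omega
  · rintro (_ | i) hi0 hi
    · omega
    · exact hp_notMem i (by omega)
  · rintro (_ | _ | i) hi0 hi w hw
    · omega
    · show G.Adj (p 0) w ↔ w = x ∨ w = p 1
      rcases hw with hw | ⟨_ | j, hj, hw⟩
      · rw [hnbr w hw, or_iff_left fun h => hp_notMem 1 (by omega) (by rwa [← h])]
      · rw [hw]
        exact iff_of_true ((hnbr x hx).mpr rfl) (Or.inl rfl)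
      · rw [hw]
        show G.Adj (p 0) (p j) ↔ p j = x ∨ p j = p 1
        rw [hh.adj_first_iff (by omega), or_iff_right (hxp j (by omega)).symm]
        exact ⟨fun h => h ▸ rfl, hinj j (by omega) 1 (by omega)⟩
    · show G.Adj (p (i + 1)) w ↔ w = p i ∨ w = p (i + 2)
      refine hh.adj_iff (i := i + 1) (by omega) (by omega) ?_
      rcases hw with hw | ⟨_ | j, hj, rfl⟩
      · exact Or.inl (Set.mem_insert_of_mem _ hw)
      · exact Or.inl (Set.mem_insert_of_mem _ hx)
      · exact Or.inr ⟨j, by omega, rfl⟩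

theorem IsHandle.map {Y : Type*} {G' : SimpleGraph Y} (f : G ↪g G') {S' : Set Y}
    (hh : IsHandle G S n p) (hS : ∀ x, f x ∈ S' ↔ x ∈ S)
    (hnbr : ∀ i, 0 < i → i < n → ∀ w ∈ S', G'.Adj (f (p i)) w → w ∈ Set.range f) :
    IsHandle G' S' n (f ∘ p) := by
  obtain ⟨hn, hinj, hfirst, hlast, hint, hcons, hchord, hdeg⟩ := hh
  refine ⟨hn, fun i hi j hj h => hinj i hi j hj (f.injective h), (hS _).mpr hfirst,
    (hS _).mpr hlast, fun i hi0 hin h => hint i hi0 hin ((hS _).mp h),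
    fun i hi => f.map_adj_iff.mpr (hcons i hi),
    fun i j hij hj h => hchord i j hij hj (f.map_adj_iff.mp h), ?_⟩
  rintro i hi0 hin w hw hadj
  obtain ⟨x, rfl⟩ : w ∈ Set.range f := by
    rcases hw with hw | ⟨j, -, rfl⟩
    · exact hnbr i hi0 hin w hw hadj
    · exact ⟨p j, rfl⟩
  have hx : x ∈ S ∨ ∃ j ≤ n, x = p j := by
    rcases hw with hw | ⟨j, hj, h⟩
    · exact Or.inl ((hS x).mp hw)
    · exact Or.inr ⟨j, hj, f.injective h⟩
  simpa only [Function.comp_apply, f.injective.eq_iff] using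
    hdeg i hi0 hin x hx (f.map_adj_iff.mp hadj)

end Handles

section ChainGraph

variable {V : Type} (H : SimpleGraph V) (β : ℕ)

abbrev ChainVertex (V : Type) (β : ℕ) : Type := V × Fin (β + 1) ⊕ Bool

/-- `inl (v, 0)` is the vertex `v` of `H`, continued by a new path `inl (v, 1), …, inl (v, β)`
whose last vertex is joined to `apex`; the vertices of `U` are also joined to `foot`. -/
def chainRel (U : Set V) : ChainVertex V β → ChainVertex V β → Prop
  | .inl (u, i), .inl (v, j) => (i = 0 ∧ j = 0 ∧ H.Adj u v) ∨ (u = v ∧ (i : ℕ) + 1 = j)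
  | .inl (_, i), .inr false => i = Fin.last β
  | .inl (v, i), .inr true => i = 0 ∧ v ∈ U
  | .inr _, _ => False

def chainGraph (U : Set V) : SimpleGraph (ChainVertex V β) :=
  .fromRel (chainRel H β U)

variable {H β} {U : Set V}

abbrev apex : ChainVertex V β := .inr false

abbrev foot : ChainVertex V β := .inr true

theorem chainGraph_adj_inl_inl {u v : V} {i j : Fin (β + 1)} :
    (chainGraph H β U).Adj (.inl (u, i)) (.inl (v, j)) ↔
      (i = 0 ∧ j = 0 ∧ H.Adj u v) ∨ (u = v ∧ ((i : ℕ) + 1 = j ∨ (j : ℕ) + 1 = i)) := by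
  simp only [chainGraph, SimpleGraph.fromRel_adj, chainRel, ne_eq, Sum.inl.injEq,
    Prod.mk.injEq]
  constructor
  · rintro ⟨-, (⟨rfl, rfl, h⟩ | ⟨rfl, h⟩) | (⟨rfl, rfl, h⟩ | ⟨rfl, h⟩)⟩
    · exact Or.inl ⟨rfl, rfl, h⟩
    · exact Or.inr ⟨rfl, Or.inl h⟩
    · exact Or.inl ⟨rfl, rfl, h.symm⟩
    · exact Or.inr ⟨rfl, Or.inr h⟩
  · rintro (⟨rfl, rfl, h⟩ | ⟨rfl, h | h⟩)
    · exact ⟨fun e => h.ne e.1, Or.inl (Or.inl ⟨rfl, rfl, h⟩)⟩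
    · exact ⟨fun e => by rw [e.2] at h; omega, Or.inl (Or.inr ⟨rfl, h⟩)⟩
    · exact ⟨fun e => by rw [e.2] at h; omega, Or.inr (Or.inr ⟨rfl, h⟩)⟩

@[simp] theorem chainGraph_adj_inl_apex {v : V} {i : Fin (β + 1)} :
    (chainGraph H β U).Adj (.inl (v, i)) apex ↔ i = Fin.last β := by
  simp [chainGraph, chainRel]

@[simp] theorem chainGraph_adj_inl_foot {v : V} {i : Fin (β + 1)} :
    (chainGraph H β U).Adj (.inl (v, i)) foot ↔ i = 0 ∧ v ∈ U := by
  simp [chainGraph, chainRel]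

@[simp] theorem chainGraph_not_adj_inr_inr {a b : Bool} :
    ¬ (chainGraph H β U).Adj (.inr a) (.inr b) := by
  simp [chainGraph, chainRel]

variable (β) in
def chainPath (v : V) (j : ℕ) : ChainVertex V β :=
  if h : j ≤ β then .inl (v, ⟨j, Nat.lt_succ_of_le h⟩) else apex

theorem chainPath_of_le {v : V} {j : ℕ} (h : j ≤ β) :
    chainPath β v j = .inl (v, ⟨j, Nat.lt_succ_of_le h⟩) := dif_pos h

@[simp] theorem chainPath_zero (v : V) : chainPath β v 0 = .inl (v, 0) :=
  chainPath_of_le (Nat.zero_le β)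

@[simp] theorem chainPath_succ_self (v : V) : chainPath β v (β + 1) = apex :=
  dif_neg (by omega)

theorem inl_eq_chainPath_iff {u v : V} {i : Fin (β + 1)} {j : ℕ} :
    (.inl (u, i) : ChainVertex V β) = chainPath β v j ↔ u = v ∧ (i : ℕ) = j := by
  unfold chainPath
  split_ifs with h
  · simp [Fin.ext_iff]
  · simp only [false_iff, not_and]
    omega

theorem apex_eq_chainPath_iff {v : V} {j : ℕ} : apex = chainPath β v j ↔ β < j := by
  unfold chainPath
  split_ifs with h
  · simp only [false_iff, not_lt, h]
  · simp only [not_le.mp h]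

theorem foot_ne_chainPath (v : V) (j : ℕ) : foot ≠ chainPath β v j := by
  unfold chainPath
  split_ifs <;> simp

theorem eq_of_chainPath_eq {v : V} {i j : ℕ} (hi : i ≤ β + 1) (hj : j ≤ β + 1)
    (h : chainPath β v i = chainPath β v j) : i = j := by
  rcases Nat.lt_or_ge β i with hβi | hiβ
  · rcases Nat.lt_or_ge β j with hβj | hjβ
    · omega
    · rw [chainPath_of_le hjβ, eq_comm, inl_eq_chainPath_iff, Fin.val_mk] at h
      omega
  · rw [chainPath_of_le hiβ, inl_eq_chainPath_iff, Fin.val_mk] at h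
    exact h.2

theorem chainGraph_adj_chainPath {v : V} {k : ℕ} (hk0 : 0 < k) (hkβ : k ≤ β)
    (w : ChainVertex V β) :
    (chainGraph H β U).Adj (chainPath β v k) w ↔
      w = chainPath β v (k - 1) ∨ w = chainPath β v (k + 1) := by
  rw [chainPath_of_le hkβ]
  rcases w with ⟨u, j⟩ | _ | _
  · rw [chainGraph_adj_inl_inl, inl_eq_chainPath_iff, inl_eq_chainPath_iff]
    simp only [Fin.ext_iff, Fin.val_zero]
    by_cases huv : u = v
    · subst huv
      simp only [true_and]
      omega
    · simp only [huv, Ne.symm huv, false_and, or_false]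
      exact iff_false_intro fun h => absurd h.1 (by omega)
  · rw [chainGraph_adj_inl_apex, apex_eq_chainPath_iff, apex_eq_chainPath_iff, Fin.ext_iff]
    simp only [Fin.val_last]
    omega
  · simp only [chainGraph_adj_inl_foot, Fin.ext_iff, Fin.val_zero, foot_ne_chainPath,
      or_self, iff_false, not_and]
    omega

variable (β) in
def builtSet (S T : Set V) : Set (ChainVertex V β) :=
  {x | match x with
    | .inl (v, i) => if i = 0 then v ∈ S else v ∈ T
    | .inr _ => True}

@[simp] theorem inl_mem_builtSet {S T : Set V} {v : V} {i : Fin (β + 1)} :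
    (.inl (v, i) : ChainVertex V β) ∈ builtSet β S T ↔ if i = 0 then v ∈ S else v ∈ T :=
  Iff.rfl

@[simp] theorem inr_mem_builtSet {S T : Set V} {b : Bool} :
    (.inr b : ChainVertex V β) ∈ builtSet β S T :=
  trivial

variable (H β U) in
def chainGraphEmbedding : H ↪g chainGraph H β U where
  toFun v := .inl (v, 0)
  inj' _ _ h := by simpa using h
  map_rel_iff' {a b} := by
    change (chainGraph H β U).Adj (.inl (a, 0)) (.inl (b, 0)) ↔ H.Adj a b
    simp [chainGraph_adj_inl_inl]

@[simp] theorem chainGraphEmbedding_apply (v : V) :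
    chainGraphEmbedding H β U v = .inl (v, 0) := rfl

theorem chainGraph_adj_inl_zero_iff (hβ : 0 < β) {S T : Set V} {v : V} (hvT : v ∉ T)
    {w : ChainVertex V β} (hw : w ∈ builtSet β S T) :
    (chainGraph H β U).Adj (.inl (v, 0)) w ↔
      (∃ u ∈ S, H.Adj v u ∧ w = .inl (u, 0)) ∨ (v ∈ U ∧ w = foot) := by
  rcases w with ⟨u, j⟩ | _ | _
  · rw [chainGraph_adj_inl_inl]
    by_cases hj : j = 0
    · subst hj
      simp_all
    · simp only [inl_mem_builtSet, hj, if_false] at hw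
      refine iff_of_false ?_ (by simp [hj])
      rintro (⟨-, h, -⟩ | ⟨rfl, -⟩)
      exacts [hj h, hvT hw]
  · simp [Fin.ext_iff]
    omega
  · simp

end ChainGraph

section Building

variable {V : Type} {H : SimpleGraph V} {β : ℕ} {U S T : Set V}

theorem buildableOn_builtSet_empty : BuildableOn (chainGraph H β U) β (builtSet β ∅ ∅) := by
  have h : builtSet β (∅ : Set V) ∅ = {apex, foot} := by
    ext (⟨v, i⟩ | (_ | _)) <;> simp
  exact h ▸ .base _ _ (by simp) chainGraph_not_adj_inr_inr

theorem isHandle_chainPath (hβ : 0 < β) {v : V} (hvS : v ∈ S) (hvT : v ∉ T) :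
    IsHandle (chainGraph H β U) (builtSet β S T) (β + 1) (chainPath β v) := by
  refine isHandle_of_adj_iff (by omega) (fun i hi j hj => eq_of_chainPath_eq hi hj)
    (by simpa using hvS) (by simp) (fun i hi0 hi => ?_) (by simp [Fin.ext_iff]; omega)
    (fun i hi0 hi w _ => chainGraph_adj_chainPath hi0 (by omega) w)
  rw [chainPath_of_le (by omega), inl_mem_builtSet, if_neg (by simp [Fin.ext_iff]; omega)]
  exact hvT

theorem builtSet_union_chainPath {v : V} (hvS : v ∈ S) :
    builtSet β S T ∪ {w | ∃ j ≤ β + 1, w = chainPath β v j} = builtSet β S (insert v T) := by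
  ext (⟨u, i⟩ | _)
  · simp only [Set.mem_union, inl_mem_builtSet, Set.mem_ofPred_eq, Set.mem_insert_iff,
      inl_eq_chainPath_iff]
    have hchain : (∃ j ≤ β + 1, u = v ∧ (i : ℕ) = j) ↔ u = v :=
      ⟨fun ⟨_, _, h, _⟩ => h, fun h => ⟨i, by omega, h, rfl⟩⟩
    rw [hchain]
    split_ifs
    · exact or_iff_left_of_imp fun h => h ▸ hvS
    · exact Or.comm
  · simp

theorem BuildableOn.insert_chain (hβ : 0 < β)
    (hb : BuildableOn (chainGraph H β U) β (builtSet β S T))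
    {v : V} (hvS : v ∈ S) (hvT : v ∉ T) :
    BuildableOn (chainGraph H β U) β (builtSet β S (insert v T)) :=
  builtSet_union_chainPath hvS ▸ .handle _ _ _ hb (isHandle_chainPath hβ hvS hvT) (by omega)

theorem insert_inl_builtSet (v : V) :
    insert (.inl (v, 0)) (builtSet β S T) = builtSet β (insert v S) T := by
  ext (⟨u, i⟩ | _)
  · by_cases hi : i = 0 <;> simp [hi]
  · simp

theorem BuildableOn.insert_subleaf (hβ : 0 < β)
    (hb : BuildableOn (chainGraph H β U) β (builtSet β S T)) (hTS : T ⊆ S) {v : V} (hvS : v ∉ S)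
    {x : ChainVertex V β} (hx : x ∈ builtSet β S T)
    (hnbr : ∀ w ∈ builtSet β S T, (chainGraph H β U).Adj (.inl (v, 0)) w ↔ w = x)
    (hxa : ¬ (chainGraph H β U).Adj x apex) :
    BuildableOn (chainGraph H β U) β (builtSet β (insert v S) (insert v T)) := by
  have hvT : v ∉ T := fun h => hvS (hTS h)
  have hins := insert_inl_builtSet (β := β) (S := S) (T := T) v
  have hh : IsHandle (chainGraph H β U) (builtSet β S T) (β + 1 + 1)
      (consPath x (chainPath β v)) := by
    refine IsHandle.consPath ?_ hx (by simpa using hvS) (by simpa using hnbr)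
      (by simpa using hxa)
    rw [chainPath_zero, hins]
    exact isHandle_chainPath hβ (Set.mem_insert v S) hvT
  have hv : .inl (v, 0) ∈ {w | ∃ j ≤ β + 1, w = chainPath β v j} :=
    ⟨0, by omega, (chainPath_zero v).symm⟩
  have hset : builtSet β S T ∪ {w | ∃ j ≤ β + 1 + 1, w = consPath x (chainPath β v) j} =
      builtSet β (insert v S) (insert v T) := by
    rw [setOf_consPath, Set.union_insert, Set.insert_eq_of_mem (Set.mem_union_left _ hx),
      ← builtSet_union_chainPath (Set.mem_insert v S), ← hins, Set.insert_union,
      Set.insert_eq_of_mem (Set.mem_union_right _ hv)]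
  exact hset ▸ .handle _ _ _ hb hh (by omega)

theorem BuildableOn.union_handle (hβ : 0 < β)
    (hb : BuildableOn (chainGraph H β U) β (builtSet β S T)) (hTS : T ⊆ S) {n : ℕ} {p : ℕ → V}
    (hh : IsHandle H S n p) (hU : ∀ i, 0 < i → i < n → p i ∉ U) (hn : β ≤ n) :
    BuildableOn (chainGraph H β U) β (builtSet β (S ∪ {w | ∃ j ≤ n, w = p j}) T) := by
  have hh' : IsHandle (chainGraph H β U) (builtSet β S T) n (chainGraphEmbedding H β U ∘ p) := by
    refine hh.map _ (fun x => by simp) fun i hi0 hin w hw hadj => ?_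
    have hpT : p i ∉ T := fun h => hh.notMem hi0 hin (hTS h)
    rw [chainGraphEmbedding_apply, chainGraph_adj_inl_zero_iff hβ hpT hw] at hadj
    rcases hadj with ⟨u, -, -, rfl⟩ | ⟨hpU, -⟩
    · exact ⟨u, rfl⟩
    · exact absurd hpU (hU i hi0 hin)
  have hset : builtSet β S T ∪ {w | ∃ j ≤ n, w = (chainGraphEmbedding H β U ∘ p) j} =
      builtSet β (S ∪ {w | ∃ j ≤ n, w = p j}) T := by
    ext (⟨u, i⟩ | _)
    · by_cases hi : i = 0 <;> simp [hi]
    · simp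
  exact hset ▸ .handle _ _ _ hb hh' hn

/-- The set `U` of vertices joined to `foot` is only known once the whole construction sequence
has been read, so the invariant is stated for every `U` agreeing on `S` with the isolated
subleaves `U₀` met so far. -/
theorem exists_buildableOn_chainGraph [Finite V] (hβ : 0 < β) {S : Set V}
    (h : WeaklyBuildableOn H β S) :
    ∃ U₀ T, U₀ ⊆ S ∧ T ⊆ S ∧ ∀ U : Set V, (∀ v ∈ S, v ∈ U ↔ v ∈ U₀) →
      BuildableOn (chainGraph H β U) β (builtSet β S T) := by
  induction h with
  | empty => exact ⟨∅, ∅, subset_rfl, subset_rfl, fun U _ => buildableOn_builtSet_empty⟩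
  | subleaf S v hvS hdeg _ ih =>
    obtain ⟨U₀, T, hU₀S, hTS, hb⟩ := ih
    have hvT : v ∉ T := fun h => hvS (hTS h)
    by_cases hnb : ∃ u ∈ S, H.Adj v u
    · obtain ⟨u, huS, hvu⟩ := hnb
      have huniq : ∀ u' ∈ S, H.Adj v u' → u' = u := fun u' hu'S hvu' =>
        (Set.ncard_le_one (Set.toFinite _)).mp hdeg u' ⟨hu'S, hvu'⟩ u ⟨huS, hvu⟩
      refine ⟨U₀, insert v T, hU₀S.trans (Set.subset_insert v S),
        Set.insert_subset_insert hTS, fun U hU => ?_⟩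
      have hvU : v ∉ U := fun h => hvS (hU₀S (((hU v (Set.mem_insert v S)).mp h)))
      refine (hb U fun w hw => hU w (Set.mem_insert_of_mem v hw)).insert_subleaf hβ hTS hvS
        (x := .inl (u, 0)) (by simpa using huS) (fun w hw => ?_) (by simp [Fin.ext_iff]; omega)
      rw [chainGraph_adj_inl_zero_iff hβ hvT hw]
      constructor
      · rintro (⟨u', hu'S, hvu', rfl⟩ | ⟨hvU', -⟩)
        · rw [huniq u' hu'S hvu']
        · exact absurd hvU' hvU
      · rintro rfl
        exact Or.inl ⟨u, huS, hvu, rfl⟩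
    · push Not at hnb
      refine ⟨insert v U₀, insert v T, Set.insert_subset_insert hU₀S,
        Set.insert_subset_insert hTS, fun U hU => ?_⟩
      have hvU : v ∈ U := (hU v (Set.mem_insert v S)).mpr (Set.mem_insert v U₀)
      have hUS : ∀ w ∈ S, w ∈ U ↔ w ∈ U₀ := fun w hw => by
        rw [hU w (Set.mem_insert_of_mem v hw), Set.mem_insert_iff,
          or_iff_right (ne_of_mem_of_not_mem hw hvS)]
      refine (hb U hUS).insert_subleaf hβ hTS hvS (x := foot) (by simp) (fun w hw => ?_)
        chainGraph_not_adj_inr_inr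
      rw [chainGraph_adj_inl_zero_iff hβ hvT hw]
      simp only [hvU, true_and, or_iff_right_iff_imp]
      rintro ⟨u, huS, hvu, -⟩
      exact absurd hvu (hnb u huS)
  | handle S n p _ hh hn ih =>
    obtain ⟨U₀, T, hU₀S, hTS, hb⟩ := ih
    refine ⟨U₀, T, hU₀S.trans Set.subset_union_left, hTS.trans Set.subset_union_left,
      fun U hU => (hb U fun w hw => hU w (Or.inl hw)).union_handle hβ hTS hh ?_ hn⟩
    intro i hi0 hin hpU
    exact hh.notMem hi0 hin (hU₀S ((hU (p i) (Or.inr ⟨i, by omega, rfl⟩)).mp hpU))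

theorem buildableOn_builtSet_univ_univ [Finite V] {U T : Set V} (hβ : 0 < β)
    (hb : BuildableOn (chainGraph H β U) β (builtSet β .univ T)) :
    BuildableOn (chainGraph H β U) β (builtSet β .univ .univ) := by
  suffices ∀ R : Set V, R.Finite → BuildableOn (chainGraph H β U) β (builtSet β .univ (T ∪ R)) by
    simpa using this .univ (Set.toFinite _)
  intro R hR
  induction R, hR using Set.Finite.induction_on with
  | empty => simpa using hb
  | @insert a R _ _ ih =>
    rw [Set.union_insert]
    by_cases haTR : a ∈ T ∪ R
    · rwa [Set.insert_eq_of_mem haTR]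
    · exact ih.insert_chain hβ (Set.mem_univ a) haTR

theorem builtSet_univ_univ : builtSet β (.univ : Set V) .univ = .univ := by
  ext (⟨v, i⟩ | _) <;> simp

end Building

/-- for every integer `β ≥ 2`, every weakly `β`-buildable graph is an
induced subgraph of a `β`-buildable graph. -/
theorem statement_5 {V : Type} [Fintype V] (H : SimpleGraph V) (β : ℕ) (hβ : 2 ≤ β)
    (h : WeaklyBuildable H β) :
    ∃ (W : Type) (_ : Fintype W) (H' : SimpleGraph W),
      Buildable H' β ∧ Nonempty (H ↪g H') := by
  obtain ⟨U, T, -, -, hb⟩ := exists_buildableOn_chainGraph (by omega) h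
  refine ⟨ChainVertex V β, inferInstance, chainGraph H β U, ?_, ⟨chainGraphEmbedding H β U⟩⟩
  rw [Buildable, ← builtSet_univ_univ]
  exact buildableOn_builtSet_univ_univ (by omega) (hb U fun _ _ => Iff.rfl)

end PurePairs
end
end

section
/- Let G be a graph, let K≥2 be an integer, and let δ>0 with δK ≤ 1/4. Let A=(A_i : i∈I) be a blockade in G of length K that is not (δ,1/8)-divergent. Then there is a (1/(4δ))-expanding blockade B=(B_i : i∈I) with B_i ⊆ A_i and |B_i| ≥ (1−δK)|A_i| for every i∈I. -/
noncomputable section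

namespace PurePairs

open SimpleGraph

variable {V W : Type*}

/-!
Start from `B = A` and, while `B` is not expanding, move a set `X ⊆ B i` whose neighbourhood
in some `B j` is too small from `B i` into a pile `W i j`. Since `τ = 1/(4δ)` and
`|B i| ≥ 3|A i|/4`, every pile keeps `|N(W i j) ∩ B j| ≤ |W i j| |A j| / (3δ |A i|)`, so a pile
of size `δ |A i|` would be anticomplete to more than `|A j| / 8` vertices of `B j`,
contradicting non-divergence. Hence every pile stays below `δ |A i|`, every `B i` keeps at
least `(1 - δK) |A i|` vertices, and the process, which shrinks `∑ |B i|`, stops at an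
expanding blockade.
-/

lemma nbhd_union (G : SimpleGraph V) (X Y : Set V) :
    nbhd G (X ∪ Y) = nbhd G X ∪ nbhd G Y := by
  ext v
  simp [nbhd, or_and_right, exists_or]

lemma card_nbhd_union_inter_le (G : SimpleGraph V) (X Y C : Set V) :
    (nbhd G (X ∪ Y) ∩ C).ncard ≤ (nbhd G X ∩ C).ncard + (nbhd G Y ∩ C).ncard := by
  rw [nbhd_union, Set.union_inter_distrib_right]
  exact Set.ncard_union_le _ _

lemma exists_violation_of_not_expanding [Finite V] {G : SimpleGraph V} {I : Finset ℤ}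
    {B : ℤ → Set V} {τ : ℝ} (hB : ∀ i ∈ I, (B i).Nonempty) (h : ¬ Expanding G I B τ) :
    ∃ i ∈ I, ∃ j ∈ I, i ≠ j ∧ ∃ X ⊆ B i,
      4 * ((nbhd G X ∩ B j).ncard : ℝ) < (B j).ncard ∧
      ((nbhd G X ∩ B j).ncard : ℝ) * (B i).ncard < τ * X.ncard * (B j).ncard := by
  simp only [Expanding, not_forall, not_le, lt_min_iff] at h
  obtain ⟨i, hi, j, hj, hij, X, hX, hτ, hquarter⟩ := h
  have hBi : (0 : ℝ) < (B i).ncard := by exact_mod_cast (hB i hi).ncard_pos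
  have hBj : (0 : ℝ) < (B j).ncard := by exact_mod_cast (hB j hj).ncard_pos
  rw [div_lt_iff₀ hBj] at hτ hquarter
  rw [div_mul_eq_mul_div, lt_div_iff₀ hBi] at hτ
  exact ⟨i, hi, j, hj, hij, X, hX, by linarith, hτ⟩

/-- `B` is what remains of `A` after pruning, and `W i j` is the pile of vertices removed from
`A i` because their neighbourhood in `B j` was small. -/
structure IsPruning (G : SimpleGraph V) (I : Finset ℤ) (A : ℤ → Set V) (δ : ℝ)
    (B : ℤ → Set V) (W : ℤ → ℤ → Set V) : Prop where
  subset : ∀ i ∈ I, B i ⊆ A i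
  pruned_subset : ∀ i ∈ I, ∀ j ∈ I, W i j ⊆ A i \ B i
  subset_union_pruned : ∀ i ∈ I, A i ⊆ B i ∪ ⋃ j ∈ I, W i j
  card_pruned_le : ∀ i ∈ I, ∀ j ∈ I, ((W i j).ncard : ℝ) ≤ δ * (A i).ncard
  card_nbhd_pruned_le : ∀ i ∈ I, ∀ j ∈ I,
    3 * δ * (A i).ncard * ((nbhd G (W i j) ∩ B j).ncard : ℝ) ≤ (W i j).ncard * (A j).ncard

namespace IsPruning

variable {G : SimpleGraph V} {I : Finset ℤ} {A B : ℤ → Set V} {W : ℤ → ℤ → Set V} {δ : ℝ}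

lemma self (G : SimpleGraph V) (I : Finset ℤ) (A : ℤ → Set V) {δ : ℝ} (hδ : 0 ≤ δ) :
    IsPruning G I A δ A (fun _ _ => ∅) where
  subset _ _ := subset_rfl
  pruned_subset _ _ _ _ := Set.empty_subset _
  subset_union_pruned _ _ := Set.subset_union_left
  card_pruned_le _ _ _ _ := by simp only [Set.ncard_empty, Nat.cast_zero]; positivity
  card_nbhd_pruned_le _ _ _ _ := by simp [nbhd]

variable [Finite V]

lemma one_sub_mul_card_le (hP : IsPruning G I A δ B W) {i : ℤ} (hi : i ∈ I) :
    (1 - δ * I.card) * (A i).ncard ≤ ((B i).ncard : ℝ) := by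
  have hcover : ((A i).ncard : ℝ) ≤ (B i).ncard + ∑ j ∈ I, ((W i j).ncard : ℝ) := by
    have := (Set.ncard_le_ncard (hP.subset_union_pruned i hi)).trans
      ((Set.ncard_union_le _ _).trans (add_le_add_right (I.set_ncard_biUnion_le _) _))
    exact_mod_cast this
  have hsum : ∑ j ∈ I, ((W i j).ncard : ℝ) ≤ I.card * (δ * (A i).ncard) := by
    simpa using Finset.sum_le_sum fun j hj => hP.card_pruned_le i hi j hj
  linarith

lemma three_mul_card_le_four_mul (hP : IsPruning G I A δ B W) (hδI : δ * I.card ≤ 1 / 4)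
    {i : ℤ} (hi : i ∈ I) : 3 * ((A i).ncard : ℝ) ≤ 4 * (B i).ncard := by
  nlinarith [hP.one_sub_mul_card_le hi, (Nat.cast_nonneg (A i).ncard : (0 : ℝ) ≤ _)]

lemma nonempty (hP : IsPruning G I A δ B W) (hA : ∀ i ∈ I, (A i).Nonempty)
    (hδI : δ * I.card ≤ 1 / 4) {i : ℤ} (hi : i ∈ I) : (B i).Nonempty := by
  have hApos : (0 : ℝ) < (A i).ncard := by exact_mod_cast (hA i hi).ncard_pos
  have hBpos : (0 : ℝ) < (B i).ncard := by linarith [hP.three_mul_card_le_four_mul hδI hi]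
  exact Set.nonempty_of_ncard_ne_zero (by exact_mod_cast hBpos.ne')

lemma three_mul_card_nbhd_pruned_le (hP : IsPruning G I A δ B W) (hδ : 0 < δ)
    (hA : ∀ i ∈ I, (A i).Nonempty) {i j : ℤ} (hi : i ∈ I) (hj : j ∈ I) :
    3 * ((nbhd G (W i j) ∩ B j).ncard : ℝ) ≤ (A j).ncard := by
  have hδA : 0 < δ * (A i).ncard := mul_pos hδ (by exact_mod_cast (hA i hi).ncard_pos)
  have h := hP.card_nbhd_pruned_le i hi j hj
  have hW : ((W i j).ncard : ℝ) * (A j).ncard ≤ δ * (A i).ncard * (A j).ncard :=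
    mul_le_mul_of_nonneg_right (hP.card_pruned_le i hi j hj) (Nat.cast_nonneg _)
  nlinarith

lemma card_union_lt_of_not_divergent (hP : IsPruning G I A δ B W) (hδ : 0 < δ)
    (hA : ∀ i ∈ I, (A i).Nonempty) (hδI : δ * I.card ≤ 1 / 4)
    (hdiv : ¬ Divergent G I A δ (1 / 8)) {i j : ℤ} (hi : i ∈ I) (hj : j ∈ I) (hij : i ≠ j)
    {X : Set V} (hX : X ⊆ B i) (hquarter : 4 * ((nbhd G X ∩ B j).ncard : ℝ) < (B j).ncard) :
    ((W i j ∪ X).ncard : ℝ) < δ * (A i).ncard := by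
  by_contra! hlarge
  have hsplit := Set.ncard_inter_add_ncard_sdiff_eq_ncard (B j) (nbhd G (W i j ∪ X))
  rw [Set.inter_comm] at hsplit
  set Y := B j \ nbhd G (W i j ∪ X)
  refine hdiv ⟨i, hi, j, hj, hij, W i j ∪ X,
    Set.union_subset ((hP.pruned_subset i hi j hj).trans Set.sdiff_subset)
      (hX.trans (hP.subset i hi)),
    Y, Set.sdiff_subset.trans (hP.subset j hj), hlarge, ?_,
    fun a ha b hb hab => hb.2 ⟨a, ha, hab⟩⟩
  have hY : ((B j).ncard : ℝ) ≤
      Y.ncard + (nbhd G (W i j) ∩ B j).ncard + (nbhd G X ∩ B j).ncard := by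
    have hunion := card_nbhd_union_inter_le G (W i j) X (B j)
    exact_mod_cast (by omega : (B j).ncard ≤ _)
  linarith [hP.three_mul_card_nbhd_pruned_le hδ hA hi hj, hP.three_mul_card_le_four_mul hδI hj]

lemma prune (hP : IsPruning G I A δ B W) {i j : ℤ} (hj : j ∈ I) (hij : i ≠ j)
    {X : Set V} (hX : X ⊆ B i) (hsmall : ((W i j ∪ X).ncard : ℝ) ≤ δ * (A i).ncard)
    (hnbhd : 3 * δ * (A i).ncard * ((nbhd G X ∩ B j).ncard : ℝ) ≤ X.ncard * (A j).ncard) :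
    IsPruning G I A δ (Function.update B i (B i \ X))
      (fun k l => if k = i ∧ l = j then W i j ∪ X else W k l) := by
  have hB' : ∀ k, Function.update B i (B i \ X) k ⊆ B k := by
    intro k
    rcases eq_or_ne k i with rfl | hki
    · simp
    · simp [hki]
  have hW' : ∀ k l, W k l ⊆ if k = i ∧ l = j then W i j ∪ X else W k l := by
    intro k l
    split_ifs with hkl
    · obtain ⟨rfl, rfl⟩ := hkl
      exact Set.subset_union_left
    · exact subset_rfl
  constructor
  · exact fun k hk => (hB' k).trans (hP.subset k hk)
  · intro k hk l hl
    split_ifs with hkl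
    · obtain ⟨rfl, rfl⟩ := hkl
      rw [Function.update_self]
      exact Set.union_subset
        ((hP.pruned_subset k hk l hl).trans (Set.sdiff_subset_sdiff_right Set.sdiff_subset))
        (Set.subset_sdiff.mpr ⟨hX.trans (hP.subset k hk), Set.disjoint_sdiff_right⟩)
    · exact (hP.pruned_subset k hk l hl).trans (Set.sdiff_subset_sdiff_right (hB' k))
  · intro k hk a ha
    rcases hP.subset_union_pruned k hk ha with haB | haW
    · by_cases hkX : k = i ∧ a ∈ X
      · obtain ⟨rfl, haX⟩ := hkX
        exact Or.inr (Set.mem_biUnion hj (by simp [haX]))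
      · left
        rcases eq_or_ne k i with rfl | hki
        · rw [Function.update_self]
          exact ⟨haB, fun haX => hkX ⟨rfl, haX⟩⟩
        · simpa [hki] using haB
    · exact Or.inr (Set.biUnion_mono subset_rfl (fun l _ => hW' k l) haW)
  · intro k hk l hl
    split_ifs with hkl
    · obtain ⟨rfl, rfl⟩ := hkl
      exact hsmall
    · exact hP.card_pruned_le k hk l hl
  · intro k hk l hl
    have hδA : 0 ≤ 3 * δ * (A k).ncard := by
      linarith [hP.card_pruned_le k hk l hl, (Nat.cast_nonneg _ : (0 : ℝ) ≤ (W k l).ncard)]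
    split_ifs with hkl
    · obtain ⟨rfl, rfl⟩ := hkl
      have hdisj : Disjoint (W k l) X :=
        Set.disjoint_of_subset_right hX (Set.subset_sdiff.mp (hP.pruned_subset k hk l hl)).2
      rw [Function.update_of_ne hij.symm, Set.ncard_union_eq hdisj]
      calc 3 * δ * (A k).ncard * ((nbhd G (W k l ∪ X) ∩ B l).ncard : ℝ)
          ≤ 3 * δ * (A k).ncard * ((nbhd G (W k l) ∩ B l).ncard + (nbhd G X ∩ B l).ncard) :=
            mul_le_mul_of_nonneg_left (by exact_mod_cast card_nbhd_union_inter_le ..) hδA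
        _ ≤ _ := by push_cast; linarith [hP.card_nbhd_pruned_le k hk l hl]
    · refine le_trans (mul_le_mul_of_nonneg_left ?_ hδA) (hP.card_nbhd_pruned_le k hk l hl)
      exact_mod_cast Set.ncard_le_ncard (Set.inter_subset_inter_right _ (hB' l))

lemma exists_sum_card_lt_of_not_expanding (hP : IsPruning G I A δ B W) (hδ : 0 < δ)
    (hA : ∀ i ∈ I, (A i).Nonempty) (hδI : δ * I.card ≤ 1 / 4)
    (hdiv : ¬ Divergent G I A δ (1 / 8)) (hexp : ¬ Expanding G I B (1 / (4 * δ))) :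
    ∃ B' W', IsPruning G I A δ B' W' ∧ ∑ i ∈ I, (B' i).ncard < ∑ i ∈ I, (B i).ncard := by
  obtain ⟨i, hi, j, hj, hij, X, hX, hquarter, hτ⟩ :=
    exists_violation_of_not_expanding (fun i hi => hP.nonempty hA hδI hi) hexp
  set N : ℝ := ((nbhd G X ∩ B j).ncard : ℝ)
  have hX0 : X.ncard ≠ 0 := by
    intro h0
    rw [h0, Nat.cast_zero, mul_zero, zero_mul] at hτ
    exact hτ.not_ge (by positivity)
  have hnbhd : 3 * δ * (A i).ncard * N ≤ X.ncard * (A j).ncard := by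
    have hBi := hP.three_mul_card_le_four_mul hδI hi
    have hBj : ((B j).ncard : ℝ) ≤ (A j).ncard := by
      exact_mod_cast Set.ncard_le_ncard (hP.subset j hj)
    have hN : 0 ≤ N := Nat.cast_nonneg _
    calc 3 * δ * (A i).ncard * N = δ * N * (3 * (A i).ncard) := by ring
      _ ≤ δ * N * (4 * (B i).ncard) := by gcongr
      _ = 4 * δ * (N * (B i).ncard) := by ring
      _ ≤ 4 * δ * (1 / (4 * δ) * X.ncard * (B j).ncard) := by gcongr
      _ = X.ncard * (B j).ncard := by field_simp
      _ ≤ X.ncard * (A j).ncard := by gcongr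
  refine ⟨_, _, hP.prune hj hij hX
    (hP.card_union_lt_of_not_divergent hδ hA hδI hdiv hi hj hij hX hquarter).le hnbhd, ?_⟩
  refine Finset.sum_lt_sum (fun k _ => Set.ncard_le_ncard ?_) ⟨i, hi, ?_⟩
  · rcases eq_or_ne k i with rfl | hki
    · simp
    · simp [hki]
  · rw [Function.update_self, Set.ncard_sdiff hX]
    have := Set.ncard_le_ncard hX
    omega

end IsPruning

theorem IsPruning.exists_expanding [Finite V] {G : SimpleGraph V} {I : Finset ℤ}
    {A B : ℤ → Set V} {W : ℤ → ℤ → Set V} {δ : ℝ} (hP : IsPruning G I A δ B W) (hδ : 0 < δ)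
    (hA : ∀ i ∈ I, (A i).Nonempty) (hδI : δ * I.card ≤ 1 / 4)
    (hdiv : ¬ Divergent G I A δ (1 / 8)) :
    ∃ B' W', IsPruning G I A δ B' W' ∧ Expanding G I B' (1 / (4 * δ)) := by
  by_cases hexp : Expanding G I B (1 / (4 * δ))
  · exact ⟨B, W, hP, hexp⟩
  obtain ⟨B', W', hP', hlt⟩ := hP.exists_sum_card_lt_of_not_expanding hδ hA hδI hdiv hexp
  exact hP'.exists_expanding hδ hA hδI hdiv
termination_by ∑ i ∈ I, (B i).ncard

theorem statement_7_general {V : Type} [Fintype V] (G : SimpleGraph V) (K : ℕ)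
    (δ : ℝ) (hδ : 0 < δ) (hδK : δ * (K : ℝ) ≤ 1/4)
    (I : Finset ℤ) (A : ℤ → Set V) (hA : IsBlockade I A) (hlen : I.card = K)
    (hdiv : ¬ Divergent G I A δ (1/8)) :
    ∃ B : ℤ → Set V, IsBlockade I B ∧ (∀ i ∈ I, B i ⊆ A i) ∧
      (∀ i ∈ I, (1 - δ * (K : ℝ)) * ((A i).ncard : ℝ) ≤ ((B i).ncard : ℝ)) ∧
      Expanding G I B (1 / (4 * δ)) := by
  obtain ⟨hAne, hAdisj⟩ := hA
  subst hlen
  obtain ⟨B, W, hP, hexp⟩ := (IsPruning.self G I A hδ.le).exists_expanding hδ hAne hδK hdiv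
  refine ⟨B, ⟨fun i hi => hP.nonempty hAne hδK hi, fun i hi j hj hij => ?_⟩, hP.subset,
    fun i hi => hP.one_sub_mul_card_le hi, hexp⟩
  exact (hAdisj i hi j hj hij).mono (hP.subset i hi) (hP.subset j hj)

/-- a blockade of length `K ≥ 2` that is not `(δ, 1/8)`-divergent, with
`δK ≤ 1/4`, has a `(1/(4δ))`-expanding contraction of `A`-size at least `1 - δK`. -/
theorem statement_7 {V : Type} [Fintype V] (G : SimpleGraph V) (K : ℕ) (hK : 2 ≤ K)
    (δ : ℝ) (hδ : 0 < δ) (hδK : δ * (K : ℝ) ≤ 1/4)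
    (I : Finset ℤ) (A : ℤ → Set V) (hA : IsBlockade I A) (hlen : I.card = K)
    (hdiv : ¬ Divergent G I A δ (1/8)) :
    ∃ B : ℤ → Set V, IsBlockade I B ∧ (∀ i ∈ I, B i ⊆ A i) ∧
      (∀ i ∈ I, (1 - δ * (K : ℝ)) * ((A i).ncard : ℝ) ≤ ((B i).ncard : ℝ)) ∧
      Expanding G I B (1 / (4 * δ)) :=
  statement_7_general G K δ hδ hδK I A hA hlen hdiv

end PurePairs
end
end

section
/- Let τ≥6, and let B=(B_i : i∈I) be a blockade in a graph G. Let h_0∈I, and suppose (B_i : i∈I∖{h_0}) is τ-expanding. Let ρ be an integer such that (τ/2)^{ρ-1} ≥ |G|, let H⊆I with h_0∈H and |H|=ρ, and let v∈B_{h_0} have a neighbour in ∪_{h∈H∖{h_0}}B_h. Then there exist J ⊆ I∖H with |J| ≥ |I|/ρ − 1, and a levelling (L_0,…,L_{k-1},L_k) for some k ≤ ρ, with apex v, such that (L_0,…,L_{k-1}) is (B_i : i∈H)-rainbow and |L_k ∩ B_j| ≥ |B_j|/(4ρ) for all j∈J. -/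
noncomputable section

namespace PurePairs

open SimpleGraph

variable {V W : Type*}

/-! Grow a `(B h : h ∈ H)`-rainbow levelling `(L 0, …, L t)` from `v`, and among all of them take
one maximising the potential `|L t| / ((τ/2)^t |B (q t)|)` and then the height `t`.
If its last level were unsaturated (`τ |L t| / |B (q t)| < 1/4`) and some block `B h`, `h ∈ H`,
were unused, expansion would give `|N(L t) ∩ B h| ≥ τ |L t| |B h| / |B (q t)|`. Splitting this set
according to the first level `s ≤ t` it sees, the part first seen from `L s` is a legal new level
`L (s+1)`; if none of these extensions beat the chain, the parts shrink geometrically by `τ/2`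
and cannot sum up to the expansion bound. If instead `H` is used up, then `t = ρ - 1` and comparing
with the chain `({v}, {w})` gives saturation because `(τ/2)^(ρ-1) ≥ |G|`.
A saturated last level sees a quarter of every block `B j`, `j ∉ H`; give each `j` a level `s` from
which a `1/ρ` part of that quarter is first seen, and keep the most popular `s`.
-/

lemma sum_range_pow_succ_le {r : ℝ} (hr : 2 ≤ r) (n : ℕ) :
    ∑ s ∈ Finset.range n, r ^ (s + 1) ≤ 2 * r ^ n := by
  induction n with
  | zero => simp
  | succ n ih =>
    rw [Finset.sum_range_succ, pow_succ r n]
    nlinarith [pow_nonneg (by linarith : (0 : ℝ) ≤ r) n]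

lemma exists_le_mul_card_fiber {α : Type*} (s : Finset α) (n : ℕ) (P : α → ℕ → Prop)
    (h : ∀ a ∈ s, ∃ i ≤ n, P a i) :
    ∃ i ≤ n, ∃ J ⊆ s, (∀ a ∈ J, P a i) ∧ s.card ≤ (n + 1) * J.card := by
  classical
  choose! f hf using h
  have hmaps : ∀ a ∈ s, f a ∈ Finset.range (n + 1) := fun a ha =>
    Finset.mem_range.mpr (Nat.lt_succ_of_le (hf a ha).1)
  obtain ⟨i, hi, hle⟩ := Finset.exists_le_of_sum_le (Finset.nonempty_range_add_one)
    (f := fun _ => s.card) (g := fun i => (n + 1) * (s.filter (f · = i)).card) (by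
      rw [Finset.sum_const, Finset.card_range, smul_eq_mul, ← Finset.mul_sum,
        ← Finset.card_eq_sum_card_fiberwise hmaps])
  refine ⟨i, Nat.lt_succ_iff.mp (Finset.mem_range.mp hi), _, Finset.filter_subset _ _,
    fun a ha => ?_, hle⟩
  obtain ⟨ha, hai⟩ := Finset.mem_filter.mp ha
  exact hai ▸ (hf a ha).2

lemma card_div_card_sub_one_le {α : Type*} [DecidableEq α] {I H J : Finset α} (hHI : H ⊆ I)
    (hH : 0 < H.card) (h : (I \ H).card ≤ H.card * J.card) :
    (I.card : ℝ) / H.card - 1 ≤ J.card := by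
  have hI : I.card ≤ H.card * J.card + H.card := by
    have := Finset.card_sdiff_of_subset hHI
    have := Finset.card_le_card hHI
    omega
  rw [sub_le_iff_le_add, div_le_iff₀ (by exact_mod_cast hH)]
  exact_mod_cast hI.trans_eq (by ring)

lemma IsBlockade.mono {I J : Finset ℤ} {B : ℤ → Set V} (hB : IsBlockade I B) (hJ : J ⊆ I) :
    IsBlockade J B :=
  ⟨fun i hi => hB.1 i (hJ hi), fun i hi j hj => hB.2 i (hJ hi) j (hJ hj)⟩

lemma IsBlockade.ncard_pos [Finite V] {I : Finset ℤ} {B : ℤ → Set V} (hB : IsBlockade I B)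
    {i : ℤ} (hi : i ∈ I) : 0 < (B i).ncard :=
  (Set.ncard_pos (Set.toFinite _)).mpr (hB.1 i hi)

lemma IsBlockade.disjoint_biUnion {I J : Finset ℤ} {B : ℤ → Set V} (hB : IsBlockade I B)
    (hJ : J ⊆ I) {i : ℤ} (hi : i ∈ I) (hiJ : i ∉ J) : Disjoint (⋃ j ∈ J, B j) (B i) :=
  Set.disjoint_iUnion₂_left.mpr fun j hj =>
    hB.2 j (hJ hj) i hi fun hji => hiJ (hji ▸ hj)

lemma Expanding.mono {G : SimpleGraph V} {I J : Finset ℤ} {B : ℤ → Set V} {τ : ℝ}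
    (hexp : Expanding G I B τ) (hJ : J ⊆ I) : Expanding G J B τ :=
  fun i hi j hj => hexp i (hJ hi) j (hJ hj)

lemma Expanding.min_mul_le {G : SimpleGraph V} {I : Finset ℤ} {B : ℤ → Set V} {τ : ℝ}
    (hexp : Expanding G I B τ) {i j : ℤ} (hi : i ∈ I) (hj : j ∈ I) (hij : i ≠ j)
    {X : Set V} (hX : X ⊆ B i) (hBj : 0 < (B j).ncard) :
    min (τ * X.ncard / (B i).ncard) (1 / 4) * (B j).ncard ≤ (nbhd G X ∩ B j).ncard :=
  (le_div_iff₀ (by exact_mod_cast hBj)).mp (hexp i hi j hj hij X hX)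

section Neighbourhoods

variable {G : SimpleGraph V}

lemma anticomplete_iff_disjoint_nbhd {A C : Set V} :
    Anticomplete G A C ↔ Disjoint (nbhd G A) C := by
  simp only [Anticomplete, Set.disjoint_left, nbhd]
  grind

variable (G) in
def newNbhd (L : ℕ → Set V) (s : ℕ) : Set V :=
  disjointed (fun u => nbhd G (L u)) s

lemma mem_newNbhd {L : ℕ → Set V} {s : ℕ} {x : V} :
    x ∈ newNbhd G L s ↔ x ∈ nbhd G (L s) ∧ ∀ u < s, x ∉ nbhd G (L u) := by
  simp [newNbhd, disjointed_eq_inter_compl]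

lemma newNbhd_subset (L : ℕ → Set V) (s : ℕ) : newNbhd G L s ⊆ nbhd G (L s) :=
  disjointed_subset _ _

lemma newNbhd_congr {L L' : ℕ → Set V} {s : ℕ} (h : ∀ u ≤ s, L u = L' u) :
    newNbhd G L s = newNbhd G L' s := by
  ext x
  simp only [mem_newNbhd, h s le_rfl]
  exact and_congr_right fun _ => forall₂_congr fun u hu => by rw [h u hu.le]

lemma ncard_nbhd_inter_le_sum [Finite V] (L : ℕ → Set V) (T : Set V) (t : ℕ) :
    (nbhd G (L t) ∩ T).ncard ≤ ∑ s ∈ Finset.range (t + 1), (newNbhd G L s ∩ T).ncard := by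
  have hcover : nbhd G (L t) ∩ T ⊆ ⋃ s ∈ Finset.range (t + 1), newNbhd G L s ∩ T := by
    rw [← Set.iUnion₂_inter]
    unfold newNbhd
    rw [biUnion_range_succ_disjointed]
    exact Set.inter_subset_inter_left _ (le_partialSups (fun u => nbhd G (L u)) t)
  exact (Set.ncard_le_ncard hcover).trans (Finset.set_ncard_biUnion_le _ _)

lemma isLevelling_of_subset_newNbhd {L : ℕ → Set V} {k : ℕ} (hk : 1 ≤ k)
    (h0 : (L 0).ncard = 1) (hdisj : ∀ i ≤ k, ∀ j ≤ k, i ≠ j → Disjoint (L i) (L j))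
    (hnew : ∀ s < k, L (s + 1) ⊆ newNbhd G L s) : IsLevelling G L k := by
  refine ⟨hk, h0, hdisj, fun i hi hik => ?_, fun i _ hik h hh => ?_⟩
  · obtain ⟨s, rfl⟩ := Nat.exists_eq_add_of_le' hi
    exact (hnew s (by omega)).trans (newNbhd_subset L s)
  · obtain ⟨s, rfl⟩ : ∃ s, i = s + 1 := ⟨i - 1, by omega⟩
    rw [anticomplete_iff_disjoint_nbhd]
    exact Set.disjoint_right.mpr fun x hx => (mem_newNbhd.mp (hnew s (by omega) hx)).2 h (by omega)

lemma subset_newNbhd_update {L : ℕ → Set V} {s : ℕ} {N : Set V}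
    (hL : ∀ u < s, L (u + 1) ⊆ newNbhd G L u) (hN : N ⊆ newNbhd G L s) :
    ∀ u < s + 1, Function.update L (s + 1) N (u + 1) ⊆
      newNbhd G (Function.update L (s + 1) N) u := by
  intro u hu
  rw [newNbhd_congr (L' := L) fun w hw => Function.update_of_ne (by omega) _ _]
  rcases Nat.lt_succ_iff_lt_or_eq.mp hu with hu | rfl
  · rw [Function.update_of_ne (by omega)]
    exact hL u hu
  · rwa [Function.update_self]

end Neighbourhoods

lemma exists_mem_forall_ne {α : Type*} {H : Finset α} (q : ℕ → α) {t : ℕ} (ht : t + 1 < H.card) :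
    ∃ h ∈ H, ∀ i ≤ t, q i ≠ h := by
  classical
  obtain ⟨h, hh, hfresh⟩ := Finset.exists_mem_notMem_of_card_lt_card
    (s := (Finset.range (t + 1)).image q) ((Finset.card_image_le.trans_eq
      (Finset.card_range _)).trans_lt ht)
  exact ⟨h, hh, fun i hi hqi =>
    hfresh (Finset.mem_image.mpr ⟨i, Finset.mem_range.mpr (Nat.lt_succ_of_le hi), hqi⟩)⟩

/-- A `(B h : h ∈ H)`-rainbow levelling `(L 0, …, L t)` with apex `v ∈ B h₀`, level `i` lying in
`B (q i)`. The levelling axioms are encoded by `subset_newNbhd`, a form that survives cutting the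
chain at level `s` and replacing `L (s + 1)`. -/
structure IsRainbowChain (G : SimpleGraph V) (B : ℤ → Set V) (H : Finset ℤ) (h₀ : ℤ) (v : V)
    (t : ℕ) (q : ℕ → ℤ) (L : ℕ → Set V) : Prop where
  one_le : 1 ≤ t
  apex : L 0 = {v}
  index_zero : q 0 = h₀
  index_mem : ∀ i ≤ t, q i ∈ H
  index_inj : ∀ i ≤ t, ∀ j ≤ t, q i = q j → i = j
  subset_block : ∀ i ≤ t, L i ⊆ B (q i)
  subset_newNbhd : ∀ s < t, L (s + 1) ⊆ newNbhd G L s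

namespace IsRainbowChain

variable {G : SimpleGraph V} {B : ℤ → Set V} {H : Finset ℤ} {h₀ : ℤ} {v : V} {t : ℕ}
  {q : ℕ → ℤ} {L : ℕ → Set V}

lemma of_adj (hh₀ : h₀ ∈ H) (hv : v ∈ B h₀) {h₁ : ℤ} (hh₁ : h₁ ∈ H.erase h₀) {w : V}
    (hw : w ∈ B h₁) (hvw : G.Adj v w) :
    IsRainbowChain G B H h₀ v 1 (Function.update (fun _ => h₀) 1 h₁)
      (Function.update (fun _ => {v}) 1 {w}) where
  one_le := le_rfl
  apex := rfl
  index_zero := rfl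
  index_mem i hi := by
    interval_cases i
    exacts [hh₀, (Finset.mem_erase.mp hh₁).2]
  index_inj i hi j hj hij := by
    interval_cases i <;> interval_cases j <;>
      simp_all [eq_comm]
  subset_block i hi := by
    interval_cases i <;> simpa
  subset_newNbhd s hs := by
    obtain rfl : s = 0 := by omega
    simpa [newNbhd, nbhd] using hvw

lemma card_le (hc : IsRainbowChain G B H h₀ v t q L) : t + 1 ≤ H.card := by
  classical
  have hinj : Set.InjOn q (Finset.range (t + 1)) := fun i hi j hj hij =>
    hc.index_inj i (Nat.lt_succ_iff.mp (Finset.mem_range.mp hi)) j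
      (Nat.lt_succ_iff.mp (Finset.mem_range.mp hj)) hij
  calc t + 1 = ((Finset.range (t + 1)).image q).card := by
        rw [Finset.card_image_of_injOn hinj, Finset.card_range]
    _ ≤ H.card := Finset.card_le_card fun h hh => by
        obtain ⟨i, hi, rfl⟩ := Finset.mem_image.mp hh
        exact hc.index_mem i (Nat.lt_succ_iff.mp (Finset.mem_range.mp hi))

lemma extend (hc : IsRainbowChain G B H h₀ v t q L) {s : ℕ} (hs : s ≤ t) {h : ℤ} (hh : h ∈ H)
    (hfresh : ∀ i ≤ s, q i ≠ h) {N : Set V} (hN : N ⊆ newNbhd G L s ∩ B h) :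
    IsRainbowChain G B H h₀ v (s + 1) (Function.update q (s + 1) h)
      (Function.update L (s + 1) N) where
  one_le := by omega
  apex := by rw [Function.update_of_ne (by omega)]; exact hc.apex
  index_zero := by rw [Function.update_of_ne (by omega)]; exact hc.index_zero
  index_mem i hi := by
    rcases Nat.le_add_one_iff.mp hi with hi | rfl
    · rw [Function.update_of_ne (by omega)]; exact hc.index_mem i (by omega)
    · rwa [Function.update_self]
  index_inj i hi j hj hij := by
    rcases Nat.le_add_one_iff.mp hi with hi | rfl <;>
      rcases Nat.le_add_one_iff.mp hj with hj | rfl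
    · rw [Function.update_of_ne (by omega), Function.update_of_ne (by omega)] at hij
      exact hc.index_inj i (by omega) j (by omega) hij
    · rw [Function.update_of_ne (by omega), Function.update_self] at hij
      exact absurd hij (hfresh i (by omega))
    · rw [Function.update_self, Function.update_of_ne (by omega)] at hij
      exact absurd hij.symm (hfresh j (by omega))
    · rfl
  subset_block i hi := by
    rcases Nat.le_add_one_iff.mp hi with hi | rfl
    · rw [Function.update_of_ne (by omega), Function.update_of_ne (by omega)]
      exact hc.subset_block i (by omega)
    · rw [Function.update_self, Function.update_self]
      exact hN.trans Set.inter_subset_right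
  subset_newNbhd := subset_newNbhd_update (fun u hu => hc.subset_newNbhd u (by omega))
    (hN.trans Set.inter_subset_left)

lemma index_ne (hc : IsRainbowChain G B H h₀ v t q L) : q t ≠ h₀ := fun hq => by
  have := hc.index_inj t le_rfl 0 (Nat.zero_le _) (hq.trans hc.index_zero.symm)
  have := hc.one_le
  omega

lemma isLevelling_update (hc : IsRainbowChain G B H h₀ v t q L) (hB : IsBlockade H B) {s : ℕ}
    (hs : s ≤ t) {N : Set V} (hN : N ⊆ newNbhd G L s) (hNB : ∀ i ≤ s, Disjoint N (B (q i))) :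
    IsLevelling G (Function.update L (s + 1) N) (s + 1) := by
  have hblock : ∀ i ≤ s, Function.update L (s + 1) N i ⊆ B (q i) := fun i hi => by
    rw [Function.update_of_ne (by omega)]
    exact hc.subset_block i (by omega)
  refine isLevelling_of_subset_newNbhd (by omega) ?_ (fun i hi j hj hij => ?_)
    (subset_newNbhd_update (fun u hu => hc.subset_newNbhd u (by omega)) hN)
  · rw [Function.update_of_ne (by omega), hc.apex, Set.ncard_singleton]
  rcases Nat.le_add_one_iff.mp hi with hi | rfl <;>
    rcases Nat.le_add_one_iff.mp hj with hj | rfl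
  · refine Set.disjoint_of_subset (hblock i (by omega)) (hblock j (by omega))
      (hB.2 _ (hc.index_mem i (by omega)) _ (hc.index_mem j (by omega)) fun hq => hij ?_)
    exact hc.index_inj i (by omega) j (by omega) hq
  · rw [Function.update_self]
    exact Set.disjoint_of_subset_left (hblock i (by omega)) (hNB i (by omega)).symm
  · rw [Function.update_self]
    exact Set.disjoint_of_subset_right (hblock j (by omega)) (hNB j (by omega))
  · exact absurd rfl hij

lemma rainbowLevelling_update (hc : IsRainbowChain G B H h₀ v t q L) {s : ℕ} (hs : s ≤ t)
    (N : Set V) : RainbowLevelling H B (Function.update L (s + 1) N) s :=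
  ⟨q, fun i hi => ⟨hc.index_mem i (by omega), by
    rw [Function.update_of_ne (by omega)]; exact hc.subset_block i (by omega)⟩,
    fun i hi j hj => hc.index_inj i (by omega) j (by omega)⟩

end IsRainbowChain

lemma Expanding.exists_le_ncard_newNbhd_inter [Finite V] {G : SimpleGraph V} {I : Finset ℤ}
    {B : ℤ → Set V} {τ : ℝ} (hexp : Expanding G I B τ) {i j : ℤ} (hi : i ∈ I) (hj : j ∈ I)
    (hij : i ≠ j) (hBj : 0 < (B j).ncard) {L : ℕ → Set V} {t : ℕ} (hL : L t ⊆ B i)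
    (hsat : 1 / 4 ≤ τ * (L t).ncard / (B i).ncard) :
    ∃ s ≤ t, (B j).ncard ≤ 4 * (t + 1) * (newNbhd G L s ∩ B j).ncard := by
  have hquarter : (B j).ncard ≤ 4 * (nbhd G (L t) ∩ B j).ncard := by
    have := hexp.min_mul_le hi hj hij hL hBj
    rw [min_eq_right hsat] at this
    exact_mod_cast (by linarith : ((B j).ncard : ℝ) ≤ 4 * (nbhd G (L t) ∩ B j).ncard)
  obtain ⟨s, hs, hle⟩ := Finset.exists_le_of_sum_le (Finset.nonempty_range_add_one (n := t))
    (f := fun _ => (B j).ncard) (g := fun s => 4 * (t + 1) * (newNbhd G L s ∩ B j).ncard) (by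
      rw [Finset.sum_const, Finset.card_range, smul_eq_mul, ← Finset.mul_sum, mul_comm 4,
        mul_assoc]
      exact Nat.mul_le_mul_left _
        (hquarter.trans (Nat.mul_le_mul_left 4 (ncard_nbhd_inter_le_sum L (B j) t))))
  exact ⟨s, Nat.lt_succ_iff.mp (Finset.mem_range.mp hs), hle⟩

def potential (τ : ℝ) (B : ℤ → Set V) (t : ℕ) (q : ℕ → ℤ) (L : ℕ → Set V) : ℝ :=
  (L t).ncard / ((τ / 2) ^ t * (B (q t)).ncard)

lemma one_quarter_le_of_inv_le_potential [Fintype V] {B : ℤ → Set V} {τ : ℝ} (hτ : 0 < τ)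
    {t : ℕ} {q : ℕ → ℤ} {L : ℕ → Set V} (hb : 0 < (B (q t)).ncard)
    (hV : (Fintype.card V : ℝ) ≤ (τ / 2) ^ t)
    (hφ : 1 / (τ / 2 * Fintype.card V) ≤ potential τ B t q L) :
    1 / 4 ≤ τ * (L t).ncard / (B (q t)).ncard := by
  obtain ⟨x, -⟩ := Set.nonempty_of_ncard_ne_zero hb.ne'
  have hN : (0 : ℝ) < Fintype.card V := by exact_mod_cast Fintype.card_pos_iff.mpr ⟨x⟩
  have hb' : (0 : ℝ) < (B (q t)).ncard := by exact_mod_cast hb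
  rw [potential, div_le_div_iff₀ (by positivity) (by positivity), one_mul] at hφ
  have : ((B (q t)).ncard : ℝ) ≤ τ / 2 * (L t).ncard := by
    nlinarith [mul_le_mul_of_nonneg_right hV hb'.le]
  rw [le_div_iff₀ hb']
  linarith

namespace IsRainbowChain

variable {G : SimpleGraph V} {B : ℤ → Set V} {H : Finset ℤ} {h₀ : ℤ} {v : V} {t : ℕ}
  {q : ℕ → ℤ} {L : ℕ → Set V}

lemma exists_extend_lt [Finite V] (hc : IsRainbowChain G B H h₀ v t q L) {τ : ℝ} (hτ : 4 ≤ τ)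
    (hB : IsBlockade H B) (hexp : Expanding G (H.erase h₀) B τ)
    (hunsat : τ * (L t).ncard / (B (q t)).ncard < 1 / 4) {h : ℤ} (hh : h ∈ H)
    (hfresh : ∀ i ≤ t, q i ≠ h) :
    ∃ s ≤ t, toLex (potential τ B t q L, t) <
      toLex (potential τ B (s + 1) (Function.update q (s + 1) h)
        (Function.update L (s + 1) (newNbhd G L s ∩ B h)), s + 1) := by
  have hb : (0 : ℝ) < (B h).ncard := by exact_mod_cast hB.ncard_pos hh
  have hbt : (0 : ℝ) < (B (q t)).ncard := by exact_mod_cast hB.ncard_pos (hc.index_mem t le_rfl)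
  have hφ : 0 ≤ potential τ B t q L := by unfold potential; positivity
  have hqt : q t ∈ H.erase h₀ := Finset.mem_erase.mpr ⟨hc.index_ne, hc.index_mem t le_rfl⟩
  have hh' : h ∈ H.erase h₀ :=
    Finset.mem_erase.mpr ⟨fun hq => hfresh 0 (Nat.zero_le _) (hc.index_zero.trans hq.symm), hh⟩
  have hexpand : potential τ B t q L * (2 * (τ / 2) ^ (t + 1) * (B h).ncard) ≤
      (nbhd G (L t) ∩ B h).ncard := by
    have := hexp.min_mul_le hqt hh' (hfresh t le_rfl) (hc.subset_block t le_rfl)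
      (hB.ncard_pos hh)
    rw [min_eq_left hunsat.le] at this
    refine le_of_eq_of_le ?_ this
    have : (τ / 2) ^ t ≠ 0 := pow_ne_zero _ (by positivity)
    unfold potential
    field_simp
    ring
  by_contra! hsmall
  simp only [Prod.Lex.toLex_le_toLex, potential, Function.update_self] at hsmall
  have hle : ∀ s ≤ t, ((newNbhd G L s ∩ B h).ncard : ℝ) ≤
      potential τ B t q L * ((τ / 2) ^ (s + 1) * (B h).ncard) := by
    intro s hs
    rcases hsmall s hs with hlt | ⟨heq, -⟩
    · exact ((div_lt_iff₀ (by positivity)).mp hlt).le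
    · exact ((div_eq_iff (by positivity)).mp heq).le
  have hlt : ((newNbhd G L t ∩ B h).ncard : ℝ) <
      potential τ B t q L * ((τ / 2) ^ (t + 1) * (B h).ncard) := by
    rcases hsmall t le_rfl with hlt | ⟨-, hle⟩
    · exact (div_lt_iff₀ (by positivity)).mp hlt
    · omega
  have := calc potential τ B t q L * (2 * (τ / 2) ^ (t + 1) * (B h).ncard)
      ≤ (nbhd G (L t) ∩ B h).ncard := hexpand
    _ ≤ ∑ s ∈ Finset.range (t + 1), ((newNbhd G L s ∩ B h).ncard : ℝ) := by
      exact_mod_cast ncard_nbhd_inter_le_sum L (B h) t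
    _ < ∑ s ∈ Finset.range (t + 1), potential τ B t q L * ((τ / 2) ^ (s + 1) * (B h).ncard) :=
      Finset.sum_lt_sum (fun s hs => hle s (Nat.lt_succ_iff.mp (Finset.mem_range.mp hs)))
        ⟨t, Finset.self_mem_range_succ t, hlt⟩
    _ ≤ potential τ B t q L * (2 * (τ / 2) ^ (t + 1) * (B h).ncard) := by
      rw [← Finset.mul_sum, ← Finset.sum_mul]
      gcongr
      exact sum_range_pow_succ_le (by linarith) _
  exact this.false

end IsRainbowChain

lemma exists_isRainbowChain_saturated [Fintype V] {G : SimpleGraph V} {B : ℤ → Set V}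
    {H : Finset ℤ} {h₀ : ℤ} {v : V} {τ : ℝ} (hτ : 4 ≤ τ) (hB : IsBlockade H B)
    (hexp : Expanding G (H.erase h₀) B τ)
    (hV : (Fintype.card V : ℝ) ≤ (τ / 2) ^ (H.card - 1)) (hh₀ : h₀ ∈ H) (hv : v ∈ B h₀)
    (hvn : ∃ h ∈ H.erase h₀, ∃ w ∈ B h, G.Adj v w) :
    ∃ t q L, IsRainbowChain G B H h₀ v t q L ∧ 1 / 4 ≤ τ * (L t).ncard / (B (q t)).ncard := by
  obtain ⟨h₁, hh₁, w, hw, hvw⟩ := hvn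
  have hc₁ := IsRainbowChain.of_adj hh₀ hv hh₁ hw hvw
  set K : Set (ℝ ×ₗ ℕ) :=
    {k | ∃ t q L, IsRainbowChain G B H h₀ v t q L ∧ toLex (potential τ B t q L, t) = k}
  have hK : K.Finite := by
    refine (((Set.finite_Iic H.card).prod ((Set.finite_Iic (Fintype.card V)).prod
      H.finite_toSet)).image fun p : ℕ × ℕ × ℤ =>
        toLex ((p.2.1 : ℝ) / ((τ / 2) ^ p.1 * (B p.2.2).ncard), p.1)).subset ?_
    rintro _ ⟨t, q, L, hc, rfl⟩
    refine ⟨(t, (L t).ncard, q t), ⟨?_, ?_, hc.index_mem t le_rfl⟩, rfl⟩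
    · exact Set.mem_Iic.mpr (Nat.le_of_succ_le hc.card_le)
    · exact Set.mem_Iic.mpr ((Set.ncard_le_card _).trans_eq Nat.card_eq_fintype_card)
  obtain ⟨_, ⟨t, q, L, hc, rfl⟩, hmax⟩ := K.exists_max_image id hK ⟨_, _, _, _, hc₁, rfl⟩
  refine ⟨t, q, L, hc, ?_⟩
  by_contra! hunsat
  by_cases htop : t + 1 < H.card
  · obtain ⟨h, hh, hfresh⟩ := exists_mem_forall_ne q htop
    obtain ⟨s, hs, hlt⟩ := hc.exists_extend_lt hτ hB hexp hunsat hh hfresh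
    exact (hmax _ ⟨_, _, _, hc.extend hs hh (fun i hi => hfresh i (hi.trans hs)) subset_rfl,
      rfl⟩).not_gt hlt
  refine hunsat.not_ge (one_quarter_le_of_inv_le_potential (by linarith)
    (hB.ncard_pos (hc.index_mem t le_rfl))
    (hV.trans (pow_le_pow_right₀ (by linarith) (by omega))) ?_)
  have hφ₁ : potential τ B 1 _ _ ≤ potential τ B t q L :=
    (Prod.Lex.toLex_le_toLex.mp (hmax _ ⟨_, _, _, hc₁, rfl⟩)).elim le_of_lt fun h => h.1.le
  refine le_trans ?_ hφ₁
  have hB₁ : (0 : ℝ) < (B h₁).ncard := by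
    exact_mod_cast hB.ncard_pos (Finset.mem_of_mem_erase hh₁)
  simp only [potential, Function.update_self, Set.ncard_singleton, Nat.cast_one, pow_one]
  gcongr
  exact_mod_cast (Set.ncard_le_card _).trans_eq Nat.card_eq_fintype_card

theorem statement_9_general {V : Type} [Fintype V] (G : SimpleGraph V) (τ : ℝ) (hτ : 6 ≤ τ)
    (I : Finset ℤ) (B : ℤ → Set V) (hB : IsBlockade I B)
    (h₀ : ℤ) (hexp : Expanding G (I.erase h₀) B τ)
    (ρ : ℕ) (hρ : (Fintype.card V : ℝ) ≤ (τ / 2) ^ (ρ - 1))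
    (H : Finset ℤ) (hHI : H ⊆ I) (hh₀H : h₀ ∈ H) (hHcard : H.card = ρ)
    (v : V) (hv : v ∈ B h₀) (hvn : ∃ h ∈ H.erase h₀, ∃ w ∈ B h, G.Adj v w) :
    ∃ J ⊆ I \ H, (I.card : ℝ) / (ρ : ℝ) - 1 ≤ (J.card : ℝ) ∧
      ∃ (k : ℕ) (L : ℕ → Set V), k ≤ ρ ∧ IsLevelling G L k ∧ L 0 = {v} ∧
        RainbowLevelling H B L (k - 1) ∧
        ∀ j ∈ J, ((B j).ncard : ℝ) / (4 * (ρ : ℝ)) ≤ ((L k ∩ B j).ncard : ℝ) := by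
  subst hHcard
  have hBH := hB.mono hHI
  obtain ⟨t, q, L, hc, hsat⟩ := exists_isRainbowChain_saturated (by linarith) hBH
    (hexp.mono (Finset.erase_subset_erase h₀ hHI)) hρ hh₀H hv hvn
  have hqt : q t ∈ H := hc.index_mem t le_rfl
  obtain ⟨s, hs, J, hJ, hJdense, hJcard⟩ := exists_le_mul_card_fiber (I \ H) t _
    fun j hj => by
      obtain ⟨hjI, hjH⟩ := Finset.mem_sdiff.mp hj
      exact hexp.exists_le_ncard_newNbhd_inter (Finset.mem_erase.mpr ⟨hc.index_ne, hHI hqt⟩)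
        (Finset.mem_erase.mpr ⟨ne_of_mem_of_not_mem hh₀H hjH |>.symm, hjI⟩)
        (ne_of_mem_of_not_mem hqt hjH) (hB.ncard_pos hjI) (hc.subset_block t le_rfl) hsat
  have hJH : ∀ j ∈ J, j ∉ H := fun j hj => (Finset.mem_sdiff.mp (hJ hj)).2
  have hHpos : 0 < H.card := Finset.card_pos.mpr ⟨h₀, hh₀H⟩
  set N := newNbhd G L s ∩ ⋃ j ∈ J, B j
  refine ⟨J, hJ, ?_, s + 1, Function.update L (s + 1) N, by have := hc.card_le; omega,
    hc.isLevelling_update hBH hs Set.inter_subset_left fun i hi => ?_, ?_,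
    by simpa using hc.rainbowLevelling_update hs N, fun j hj => ?_⟩
  · exact card_div_card_sub_one_le hHI hHpos (hJcard.trans (Nat.mul_le_mul_right _ hc.card_le))
  · have hqi := hc.index_mem i (by omega)
    exact (hB.disjoint_biUnion (hJ.trans Finset.sdiff_subset) (hHI hqi)
      fun hiJ => hJH _ hiJ hqi).mono_left Set.inter_subset_right
  · rw [Function.update_of_ne (by omega), hc.apex]
  · have hsub : newNbhd G L s ∩ B j ⊆ N ∩ B j := fun x hx =>
      ⟨⟨hx.1, Set.mem_biUnion hj hx.2⟩, hx.2⟩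
    rw [Function.update_self, div_le_iff₀ (by positivity), mul_comm]
    exact_mod_cast (hJdense j hj).trans
      (Nat.mul_le_mul (by have := hc.card_le; omega) (Set.ncard_le_ncard hsub))

/-- building a levelling inside an expanding blockade. -/
theorem statement_9 {V : Type} [Fintype V] (G : SimpleGraph V) (τ : ℝ) (hτ : 6 ≤ τ)
    (I : Finset ℤ) (B : ℤ → Set V) (hB : IsBlockade I B)
    (h₀ : ℤ) (hh₀ : h₀ ∈ I) (hexp : Expanding G (I.erase h₀) B τ)
    (ρ : ℕ) (hρ : (Fintype.card V : ℝ) ≤ (τ / 2) ^ (ρ - 1))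
    (H : Finset ℤ) (hHI : H ⊆ I) (hh₀H : h₀ ∈ H) (hHcard : H.card = ρ)
    (v : V) (hv : v ∈ B h₀) (hvn : ∃ h ∈ H.erase h₀, ∃ w ∈ B h, G.Adj v w) :
    ∃ J ⊆ I \ H, (I.card : ℝ) / (ρ : ℝ) - 1 ≤ (J.card : ℝ) ∧
      ∃ (k : ℕ) (L : ℕ → Set V), k ≤ ρ ∧ IsLevelling G L k ∧ L 0 = {v} ∧
        RainbowLevelling H B L (k - 1) ∧
        ∀ j ∈ J, ((B j).ncard : ℝ) / (4 * (ρ : ℝ)) ≤ ((L k ∩ B j).ncard : ℝ) :=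
  statement_9_general G τ hτ I B hB h₀ hexp ρ hρ H hHI hh₀H hHcard v hv hvn

end PurePairs
end
end

section
/- Let (L, M, C) be an A-rainbow bi-levelling in a graph G of height ℓ, and let x belong to the base of M and y belong to the base of L. Then there is an induced path P between x and y of length ℓ (number of edges) such that each of its vertices belongs to a different block of A, each of these blocks of A includes no block of C, and no internal vertex of P has a neighbour in any block of C. -/
/-!
Following the covering relations backwards gives a path from `x` down `M` to the common
apex and one from the apex up `L` to `y`; together they pick one vertex from each of the
levels `M m, …, M 1, L 0, …, L k`. These levels are pairwise disjoint and only consecutive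
ones can be adjacent (inside `L` and `M` by the levelling axioms, across by parallelism),
so the path is induced. The rainbow condition puts the levels into distinct blocks of `A`,
distinct from those holding the blocks of `C`, and since both levellings reach `⋃ C`, only
the two bases can have neighbours in `C`.
-/

noncomputable section

namespace PurePairs

open SimpleGraph

variable {V W : Type*}

lemma Anticomplete.symm {G : SimpleGraph V} {X Y : Set V} (h : Anticomplete G X Y) :
    Anticomplete G Y X :=
  fun y hy x hx hxy => h x hx y hy hxy.symm

lemma IsBlockade.not_subset_of_ne {I : Finset ℤ} {A : ℤ → Set V} (hA : IsBlockade I A)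
    {a b : ℤ} (ha : a ∈ I) (hb : b ∈ I) (hab : a ≠ b) {S : Set V} (hS : S.Nonempty)
    (hSa : S ⊆ A a) : ¬ S ⊆ A b := fun hSb =>
  Set.disjoint_left.mp (hA.2 a ha b hb hab) (hSa hS.some_mem) (hSb hS.some_mem)

lemma exists_walk_of_covers {G : SimpleGraph V} {S : ℕ → Set V} {n : ℕ}
    (hS : ∀ i, 1 ≤ i → i ≤ n → Covers G (S (i - 1)) (S i)) {v : V} (hv : v ∈ S n) :
    ∃ f : ℕ → V, f n = v ∧ (∀ i ≤ n, f i ∈ S i) ∧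
      ∀ i < n, G.Adj (f i) (f (i + 1)) := by
  induction n generalizing v with
  | zero => exact ⟨fun _ => v, rfl, fun i hi => by rwa [Nat.le_zero.mp hi], by simp⟩
  | succ n ih =>
    obtain ⟨u, hu, huv⟩ := hS (n + 1) (by omega) le_rfl v hv
    obtain ⟨f, rfl, hfS, hfadj⟩ := ih (fun i h1 h2 => hS i h1 (by omega)) (by simpa using hu)
    refine ⟨Function.update f (n + 1) v, by simp, fun i hi => ?_, fun i hi => ?_⟩
    · rcases hi.lt_or_eq with hi | rfl
      · rw [Function.update_of_ne (by omega)]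
        exact hfS i (by omega)
      · simpa using hv
    · rcases (Nat.lt_succ_iff.mp hi).lt_or_eq with hi | rfl
      · rw [Function.update_of_ne (by omega), Function.update_of_ne (by omega)]
        exact hfadj i hi
      · rw [Function.update_of_ne (by omega), Function.update_self]
        exact huv

lemma Reaches.anticomplete {G : SimpleGraph V} {L : ℕ → Set V} {k : ℕ} {X : Set V}
    (h : Reaches G L k X) {i : ℕ} (hi : i < k) : Anticomplete G (L i) X := by
  simpa [show i ≠ k + 1 by omega] using h.2.2.2.2 (k + 1) (by omega) le_rfl i (by omega)

/-- The sequence `f m, …, f 1, g 0, g 1, …`; for the levels of a bi-levelling it runs down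
`M` to the apex and then up `L`. -/
def revAppend {α : Type*} (m : ℕ) (f g : ℕ → α) (i : ℕ) : α :=
  if i < m then f (m - i) else g (i - m)

section revAppend

variable {α : Type*} {m i : ℕ} {f g : ℕ → α}

lemma revAppend_of_lt (h : i < m) : revAppend m f g i = f (m - i) := if_pos h

lemma revAppend_of_le (h : m ≤ i) : revAppend m f g i = g (i - m) := if_neg (by omega)

lemma adj_revAppend {G : SimpleGraph V} {k : ℕ} {f g : ℕ → V}
    (hf : ∀ i < m, G.Adj (f i) (f (i + 1))) (hg : ∀ i < k, G.Adj (g i) (g (i + 1)))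
    (h0 : f 0 = g 0) : ∀ i < k + m, G.Adj (revAppend m f g i) (revAppend m f g (i + 1)) := by
  intro i hi
  rcases lt_trichotomy (i + 1) m with h | h | h
  · rw [revAppend_of_lt h, revAppend_of_lt (by omega)]
    simpa [show m - (i + 1) + 1 = m - i by omega] using (hf (m - (i + 1)) (by omega)).symm
  · rw [revAppend_of_lt (by omega), revAppend_of_le h.ge, show m - i = 0 + 1 by omega,
      show i + 1 - m = 0 by omega, ← h0]
    exact (hf 0 (by omega)).symm
  · rw [revAppend_of_le (by omega), revAppend_of_le (by omega),
      show i + 1 - m = i - m + 1 by omega]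
    exact hg (i - m) (by omega)

end revAppend

structure IsLayered (G : SimpleGraph V) (T : ℕ → Set V) (n : ℕ) : Prop where
  disjoint : ∀ i ≤ n, ∀ j ≤ n, i ≠ j → Disjoint (T i) (T j)
  anticomplete : ∀ i j, i + 1 < j → j ≤ n → Anticomplete G (T i) (T j)

namespace IsLayered

variable {G : SimpleGraph V} {T : ℕ → Set V} {n : ℕ} {p : ℕ → V}

lemma injOn (hT : IsLayered G T n) (hp : ∀ i ≤ n, p i ∈ T i) :
    ∀ i ≤ n, ∀ j ≤ n, p i = p j → i = j := by
  intro i hi j hj hij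
  by_contra hne
  exact Set.disjoint_left.mp (hT.disjoint i hi j hj hne) (hp i hi) (hij ▸ hp j hj)

lemma not_adj (hT : IsLayered G T n) (hp : ∀ i ≤ n, p i ∈ T i) :
    ∀ i j, i + 1 < j → j ≤ n → ¬ G.Adj (p i) (p j) :=
  fun i j hij hj => hT.anticomplete i j hij hj _ (hp i (by omega)) _ (hp j hj)

end IsLayered

lemma IsLevelling.isLayered {G : SimpleGraph V} {L : ℕ → Set V} {k : ℕ}
    (hL : IsLevelling G L k) : IsLayered G L k :=
  ⟨hL.2.2.1, fun i j hij hj => hL.2.2.2.2 j (by omega) hj i (by omega)⟩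

namespace Parallel

variable {G : SimpleGraph V} {L M : ℕ → Set V} {k m : ℕ}

lemma disjoint_anticomplete (hpar : Parallel G L k M m) (hM : IsLevelling G M m)
    {a b : ℕ} (ha : 1 ≤ a) (ham : a ≤ m) (hb : b ≤ k) :
    Disjoint (M a) (L b) ∧ (2 ≤ a + b → Anticomplete G (M a) (L b)) := by
  rcases Nat.eq_zero_or_pos b with rfl | hb0
  · rw [hpar.1]
    exact ⟨hM.2.2.1 a ham 0 (by omega) (by omega),
      fun _ => (hM.isLayered.anticomplete 0 a (by omega) ham).symm⟩
  have hMa : M a ⊆ ⋃ j ∈ Finset.Icc 1 m, M j :=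
    Set.subset_iUnion₂ (s := fun j _ => M j) a (Finset.mem_Icc.mpr ⟨ha, ham⟩)
  have hLb : L b ⊆ ⋃ i ∈ Finset.Icc 1 k, L i :=
    Set.subset_iUnion₂ (s := fun i _ => L i) b (Finset.mem_Icc.mpr ⟨hb0, hb⟩)
  exact ⟨hpar.2.1.mono hMa hLb, fun _ x hx y hy => hpar.2.2 x (hMa hx) y (hLb hy)⟩

lemma isLayered_revAppend (hpar : Parallel G L k M m) (hL : IsLevelling G L k)
    (hM : IsLevelling G M m) : IsLayered G (revAppend m M L) (k + m) := by
  constructor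
  · intro i hi j hj hij
    rcases lt_or_ge i m with h | h <;> rcases lt_or_ge j m with h' | h'
    · rw [revAppend_of_lt h, revAppend_of_lt h']
      exact hM.2.2.1 _ (by omega) _ (by omega) (by omega)
    · rw [revAppend_of_lt h, revAppend_of_le h']
      exact (hpar.disjoint_anticomplete hM (by omega) (by omega) (by omega)).1
    · rw [revAppend_of_le h, revAppend_of_lt h']
      exact (hpar.disjoint_anticomplete hM (by omega) (by omega) (by omega)).1.symm
    · rw [revAppend_of_le h, revAppend_of_le h']
      exact hL.2.2.1 _ (by omega) _ (by omega) (by omega)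
  · intro i j hij hj
    rcases lt_or_ge j m with h | h
    · rw [revAppend_of_lt (by omega), revAppend_of_lt h]
      exact (hM.isLayered.anticomplete _ _ (by omega) (by omega)).symm
    rcases lt_or_ge i m with h' | h'
    · rw [revAppend_of_lt h', revAppend_of_le h]
      exact (hpar.disjoint_anticomplete hM (by omega) (by omega) (by omega)).2 (by omega)
    · rw [revAppend_of_le h', revAppend_of_le h]
      exact hL.isLayered.anticomplete _ _ (by omega) (by omega)

end Parallel

lemma anticomplete_revAppend {G : SimpleGraph V} {L M : ℕ → Set V} {k m : ℕ} {X : Set V}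
    (hM : Reaches G M m X) (hL : Reaches G L k X) {i : ℕ} (h0 : 0 < i) (hi : i < k + m) :
    Anticomplete G (revAppend m M L i) X := by
  rcases lt_or_ge i m with h | h
  · rw [revAppend_of_lt h]
    exact hM.anticomplete (by omega)
  · rw [revAppend_of_le h]
    exact hL.anticomplete (by omega)

lemma RainbowBiLevelling.exists_index {I : Finset ℤ} {A : ℤ → Set V} {L M : ℕ → Set V}
    {k m : ℕ} {J : Finset ℤ} {C : ℤ → Set V} (h : RainbowBiLevelling I A L k M m J C)
    (hA : IsBlockade I A) (hC : ∀ j ∈ J, (C j).Nonempty) :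
    ∃ q : ℕ → ℤ, (∀ i ≤ k + m, q i ∈ I ∧ revAppend m M L i ⊆ A (q i)) ∧
      (∀ i ≤ k + m, ∀ j ≤ k + m, q i = q j → i = j) ∧
      (∀ i ≤ k + m, ∀ j ∈ J, ¬ C j ⊆ A (q i)) := by
  obtain ⟨qc, ql, qm, hqc, hql, hqm, -, hqlinj, hqminj, hqcql, hqcqm, hqlqm⟩ := h
  have hq : ∀ i ≤ k + m, revAppend m qm ql i ∈ I ∧
      revAppend m M L i ⊆ A (revAppend m qm ql i) ∧ ∀ j ∈ J, qc j ≠ revAppend m qm ql i := by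
    intro i hi
    rcases lt_or_ge i m with h | h
    · simp only [revAppend_of_lt h]
      exact ⟨(hqm _ (by omega) (by omega)).1, (hqm _ (by omega) (by omega)).2,
        fun j hj => hqcqm j hj _ (by omega) (by omega)⟩
    · simp only [revAppend_of_le h]
      exact ⟨(hql _ (by omega)).1, (hql _ (by omega)).2, fun j hj => hqcql j hj _ (by omega)⟩
  refine ⟨revAppend m qm ql, fun i hi => ⟨(hq i hi).1, (hq i hi).2.1⟩, ?_, fun i hi j hj =>
    hA.not_subset_of_ne (hqc j hj).1 (hq i hi).1 ((hq i hi).2.2 j hj) (hC j hj) (hqc j hj).2⟩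
  intro i hi j hj hij
  rcases lt_or_ge i m with h | h <;> rcases lt_or_ge j m with h' | h'
  · simp only [revAppend_of_lt h, revAppend_of_lt h'] at hij
    have := hqminj _ (by omega) (by omega) _ (by omega) (by omega) hij
    omega
  · simp only [revAppend_of_lt h, revAppend_of_le h'] at hij
    exact absurd hij.symm (hqlqm _ (by omega) _ (by omega) (by omega))
  · simp only [revAppend_of_le h, revAppend_of_lt h'] at hij
    exact absurd hij (hqlqm _ (by omega) _ (by omega) (by omega))
  · simp only [revAppend_of_le h, revAppend_of_le h'] at hij
    have := hqlinj _ (by omega) _ (by omega) hij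
    omega

theorem statement_11_general {V : Type} (G : SimpleGraph V)
    (I : Finset ℤ) (A : ℤ → Set V) (hA : IsBlockade I A)
    (L : ℕ → Set V) (k : ℕ) (M : ℕ → Set V) (m : ℕ) (J : Finset ℤ) (C : ℤ → Set V)
    (hbl : IsBiLevelling G L k M m J C)
    (hrb : RainbowBiLevelling I A L k M m J C)
    (x y : V) (hx : x ∈ M m) (hy : y ∈ L k) :
    ∃ p : ℕ → V, p 0 = x ∧ p (k + m) = y ∧
      (∀ i ≤ k + m, ∀ j ≤ k + m, p i = p j → i = j) ∧
      (∀ i < k + m, G.Adj (p i) (p (i + 1))) ∧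
      (∀ i j, i + 1 < j → j ≤ k + m → ¬ G.Adj (p i) (p j)) ∧
      (∃ q : ℕ → ℤ, (∀ i ≤ k + m, q i ∈ I ∧ p i ∈ A (q i)) ∧
        (∀ i ≤ k + m, ∀ j ≤ k + m, q i = q j → i = j) ∧
        (∀ i ≤ k + m, ∀ j ∈ J, ¬ C j ⊆ A (q i))) ∧
      (∀ i, 0 < i → i < k + m → ∀ j ∈ J, ∀ w ∈ C j, ¬ G.Adj (p i) w) := by
  obtain ⟨hC, hL, hM, hpar, hMC, hLC, -⟩ := hbl
  obtain ⟨fM, rfl, hfM, hfMadj⟩ := exists_walk_of_covers hM.2.2.2.1 hx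
  obtain ⟨fL, rfl, hfL, hfLadj⟩ := exists_walk_of_covers hL.2.2.2.1 hy
  have hapex : fM 0 = fL 0 := by
    obtain ⟨a, ha⟩ := Set.ncard_eq_one.mp hM.2.1
    have hM0 := hfM 0 (by omega)
    have hL0 := hfL 0 (by omega)
    rw [ha] at hM0
    rw [hpar.1, ha] at hL0
    exact hM0.trans hL0.symm
  have hp : ∀ i ≤ k + m, revAppend m fM fL i ∈ revAppend m M L i := by
    intro i hi
    rcases lt_or_ge i m with h | h
    · simpa only [revAppend_of_lt h] using hfM _ (by omega)
    · simpa only [revAppend_of_le h] using hfL _ (by omega)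
  have hT := hpar.isLayered_revAppend hL hM
  obtain ⟨q, hqA, hqinj, hqC⟩ := hrb.exists_index hA hC.1
  refine ⟨revAppend m fM fL, by simp [revAppend_of_lt hM.1],
    by simp [revAppend_of_le (Nat.le_add_left m k)], hT.injOn hp,
    adj_revAppend hfMadj hfLadj hapex, hT.not_adj hp,
    ⟨q, fun i hi => ⟨(hqA i hi).1, (hqA i hi).2 (hp i hi)⟩, hqinj, hqC⟩, ?_⟩
  intro i h0 hi j hj w hw
  exact anticomplete_revAppend hMC hLC h0 hi _ (hp i (by omega)) w (Set.mem_biUnion hj hw)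

/-- in an `A`-rainbow bi-levelling of height `k + m`, any vertex `x` of
the base of `M` and `y` of the base of `L` are joined by an induced path of length
`k + m` whose vertices lie in distinct blocks of `A`, these blocks including no block
of `C`, and whose internal vertices have no neighbours in any block of `C`. -/
theorem statement_11 {V : Type} [Fintype V] (G : SimpleGraph V)
    (I : Finset ℤ) (A : ℤ → Set V) (hA : IsBlockade I A)
    (L : ℕ → Set V) (k : ℕ) (M : ℕ → Set V) (m : ℕ) (J : Finset ℤ) (C : ℤ → Set V)
    (hbl : IsBiLevelling G L k M m J C)
    (hrb : RainbowBiLevelling I A L k M m J C)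
    (x y : V) (hx : x ∈ M m) (hy : y ∈ L k) :
    ∃ p : ℕ → V, p 0 = x ∧ p (k + m) = y ∧
      (∀ i ≤ k + m, ∀ j ≤ k + m, p i = p j → i = j) ∧
      (∀ i < k + m, G.Adj (p i) (p (i + 1))) ∧
      (∀ i j, i + 1 < j → j ≤ k + m → ¬ G.Adj (p i) (p j)) ∧
      (∃ q : ℕ → ℤ, (∀ i ≤ k + m, q i ∈ I ∧ p i ∈ A (q i)) ∧
        (∀ i ≤ k + m, ∀ j ≤ k + m, q i = q j → i = j) ∧
        (∀ i ≤ k + m, ∀ j ∈ J, ¬ C j ⊆ A (q i))) ∧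
      (∀ i, 0 < i → i < k + m → ∀ j ∈ J, ∀ w ∈ C j, ¬ G.Adj (p i) w) :=
  statement_11_general G I A hA L k M m J C hbl hrb x y hx hy

end PurePairs
end
end
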